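/- arXiv:1808.07087 — 10 statements merged into one kernel-verified Lean document; each statement's English description precedes it below -/
import Mathlib

section
/- Let k, l, p be positive integers and define f : ℝ^p → ℝ by f(y₁,…,y_p) = (y₁^{2kl} + … + y_p^{2kl})^{1/l}. Then f is of class C^k on ℝ^p. -/
/-!
The function is positively homogeneous of degree `2k`, `f (t • y) = t ^ (2k) * f y` for `t > 0`,
and smooth off the origin, where the inner sum is positive. A function `g` homogeneous of degree
`d > 0` and continuous off the origin satisfies `‖g y‖ ≤ C ‖y‖ ^ d` (take `C` its bound on the
unit sphere), hence is continuous at `0`, and for `d > 1` has derivative `0` there. Since the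
derivative of a degree-`d` homogeneous function is homogeneous of degree `d - 1`, induction shows
that such a `g` is `C^n` for every `n < d`; here `k < 2k`.
-/

open Filter Topology
open scoped ContDiff

universe u

theorem tendsto_const_mul_norm_rpow_nhds_zero {E : Type*} [SeminormedAddCommGroup E] {β : ℝ}
    (hβ : 0 < β) (C : ℝ) : Tendsto (fun y : E => C * ‖y‖ ^ β) (𝓝 0) (𝓝 0) := by
  have hcont : Tendsto (fun x : ℝ => x ^ β) (𝓝 0) (𝓝 0) := by
    simpa [ContinuousAt, Real.zero_rpow hβ.ne'] using
      Real.continuousAt_rpow_const 0 β (Or.inr hβ.le)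
  simpa using (hcont.comp tendsto_norm_zero).const_mul C

def IsPosHomogeneous {E F : Type*} [SMul ℝ E] [SMul ℝ F] (g : E → F) (d : ℝ) : Prop :=
  ∀ t : ℝ, 0 < t → ∀ y, g (t • y) = t ^ d • g y

namespace IsPosHomogeneous

section

variable {E F : Type*} [NormedAddCommGroup E] [NormedSpace ℝ E]
  [NormedAddCommGroup F] [NormedSpace ℝ F] {g : E → F} {d : ℝ}

theorem map_zero (h : IsPosHomogeneous g d) (hd : 0 < d) : g 0 = 0 := by
  have h2 : g 0 = (2 : ℝ) ^ d • g 0 := by simpa using h 2 two_pos 0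
  have h2d : (2 : ℝ) ^ d ≠ 1 := (Real.one_lt_rpow one_lt_two hd).ne'
  have : ((2 : ℝ) ^ d - 1) • g 0 = 0 := by rw [sub_smul, one_smul, ← h2, sub_self]
  exact (smul_eq_zero.mp this).resolve_left (sub_ne_zero.mpr h2d)

theorem fderiv (h : IsPosHomogeneous g d) : IsPosHomogeneous (_root_.fderiv ℝ g) (d - 1) := by
  intro t ht y
  have key : t • _root_.fderiv ℝ g (t • y) = t ^ d • _root_.fderiv ℝ g y := by
    have hfun : (fun z => g (t • z)) = t ^ d • g := funext (h t ht)
    rw [← fderiv_comp_smul, hfun, fderiv_const_smul_field, Pi.smul_apply]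
  rw [Real.rpow_sub_one ht.ne', div_eq_inv_mul, mul_smul, ← key, smul_smul,
    inv_mul_cancel₀ ht.ne', one_smul]

theorem exists_norm_le [FiniteDimensional ℝ E] (h : IsPosHomogeneous g d) (hd : 0 < d)
    (hg : ContinuousOn g {0}ᶜ) : ∃ C, ∀ y, ‖g y‖ ≤ C * ‖y‖ ^ d := by
  obtain ⟨C, hC⟩ := (isCompact_sphere (0 : E) 1).exists_bound_of_continuousOn
    (hg.mono fun u hu => ne_zero_of_norm_ne_zero (by simp_all))
  refine ⟨C, fun y => ?_⟩
  rcases eq_or_ne y 0 with rfl | hy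
  · simp [h.map_zero hd, Real.zero_rpow hd.ne']
  have hy' : 0 < ‖y‖ := norm_pos_iff.mpr hy
  have hu : ‖y‖⁻¹ • y ∈ Metric.sphere (0 : E) 1 := by
    simp [norm_smul, hy'.ne']
  calc ‖g y‖ = ‖y‖ ^ d * ‖g (‖y‖⁻¹ • y)‖ := by
        conv_lhs => rw [← smul_inv_smul₀ hy'.ne' y]
        rw [h _ hy', norm_smul, Real.norm_of_nonneg (by positivity)]
    _ ≤ ‖y‖ ^ d * C := by gcongr; exact hC _ hu
    _ = C * ‖y‖ ^ d := mul_comm _ _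

theorem continuousAt_zero [FiniteDimensional ℝ E] (h : IsPosHomogeneous g d) (hd : 0 < d)
    (hg : ContinuousOn g {0}ᶜ) : ContinuousAt g 0 := by
  obtain ⟨C, hC⟩ := h.exists_norm_le hd hg
  rw [ContinuousAt, h.map_zero hd]
  exact squeeze_zero_norm hC (tendsto_const_mul_norm_rpow_nhds_zero hd C)

theorem hasFDerivAt_zero [FiniteDimensional ℝ E] (h : IsPosHomogeneous g d) (hd : 1 < d)
    (hg : ContinuousOn g {0}ᶜ) : HasFDerivAt g (0 : E →L[ℝ] F) 0 := by
  obtain ⟨C, hC⟩ := h.exists_norm_le (zero_lt_one.trans hd) hg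
  rw [hasFDerivAt_iff_tendsto]
  refine squeeze_zero (fun _ => by positivity) (fun y => ?_)
    (tendsto_const_mul_norm_rpow_nhds_zero (sub_pos.mpr hd) C)
  rcases eq_or_ne y 0 with rfl | hy
  · simp [Real.zero_rpow (sub_pos.mpr hd).ne']
  have hy' : 0 < ‖y‖ := norm_pos_iff.mpr hy
  calc ‖y - 0‖⁻¹ * ‖g y - g 0 - (0 : E →L[ℝ] F) (y - 0)‖ = ‖y‖⁻¹ * ‖g y‖ := by
        simp [h.map_zero (zero_lt_one.trans hd)]
    _ ≤ ‖y‖⁻¹ * (C * ‖y‖ ^ d) := by gcongr; exact hC y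
    _ = C * ‖y‖ ^ (d - 1) := by rw [Real.rpow_sub_one hy'.ne']; ring

end

-- `E` and `F` share a universe because the induction passes from `F` to `E →L[ℝ] F`.
theorem contDiff {E F : Type u} [NormedAddCommGroup E] [NormedSpace ℝ E] [FiniteDimensional ℝ E]
    [NormedAddCommGroup F] [NormedSpace ℝ F] {g : E → F} {d : ℝ} {n : ℕ}
    (h : IsPosHomogeneous g d) (hn : n < d) (hg : ContDiffOn ℝ ∞ g {0}ᶜ) : ContDiff ℝ n g := by
  have hnhds : ∀ y : E, y ≠ 0 → ({0}ᶜ : Set E) ∈ 𝓝 y := fun y hy =>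
    isOpen_compl_singleton.mem_nhds hy
  induction n generalizing F g d with
  | zero =>
    rw [Nat.cast_zero] at hn
    rw [Nat.cast_zero, contDiff_zero, continuous_iff_continuousAt]
    intro y
    rcases eq_or_ne y 0 with rfl | hy
    · exact h.continuousAt_zero hn hg.continuousOn
    · exact hg.continuousOn.continuousAt (hnhds y hy)
  | succ n ih =>
    push_cast at hn ⊢
    refine contDiff_succ_iff_fderiv.mpr ⟨fun y => ?_, by simp, ?_⟩
    · rcases eq_or_ne y 0 with rfl | hy
      · exact (h.hasFDerivAt_zero (by linarith) hg.continuousOn).differentiableAt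
      · exact (hg.differentiableOn (by simp)).differentiableAt (hnhds y hy)
    · exact ih h.fderiv (by linarith) (hg.fderiv_of_isOpen isOpen_compl_singleton (by simp))

end IsPosHomogeneous

section SumPow

variable {ι : Type*} [Fintype ι] {m : ℕ}

theorem isPosHomogeneous_rpow_sum_pow (hm : Even m) (r : ℝ) :
    IsPosHomogeneous (fun y : ι → ℝ => (∑ i, y i ^ m) ^ r) (m * r) := by
  intro t ht y
  have hS : 0 ≤ ∑ i, y i ^ m := Finset.sum_nonneg fun i _ => hm.pow_nonneg _
  simp only [Pi.smul_apply, smul_eq_mul, mul_pow, ← Finset.mul_sum]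
  rw [Real.mul_rpow (by positivity) hS, ← Real.rpow_natCast, ← Real.rpow_mul ht.le]

theorem contDiffOn_rpow_sum_pow (hm : Even m) (r : ℝ) :
    ContDiffOn ℝ ∞ (fun y : ι → ℝ => (∑ i, y i ^ m) ^ r) {0}ᶜ := by
  refine ContDiffOn.rpow_const_of_ne (by fun_prop) fun y hy => ?_
  obtain ⟨i, hi⟩ := Function.ne_iff.mp hy
  exact (Finset.sum_pos' (fun j _ => hm.pow_nonneg _) ⟨i, Finset.mem_univ i, hm.pow_pos hi⟩).ne'

end SumPow

theorem stmt_0_general (k l p : ℕ) (hk : 0 < k) (hl : 0 < l) :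
    ContDiff ℝ k (fun y : Fin p → ℝ =>
      (∑ i, (y i) ^ (2 * k * l)) ^ ((1 : ℝ) / l)) := by
  have hdeg : ((2 * k * l : ℕ) : ℝ) * (1 / l) = 2 * k := by
    field_simp
    push_cast
    ring
  refine (isPosHomogeneous_rpow_sum_pow ⟨k * l, by ring⟩ _).contDiff ?_
    (contDiffOn_rpow_sum_pow ⟨k * l, by ring⟩ _)
  rw [hdeg]
  exact_mod_cast (by omega : k < 2 * k)

theorem stmt_0 (k l p : ℕ) (hk : 0 < k) (hl : 0 < l) (hp : 0 < p) :
    ContDiff ℝ k (fun y : Fin p → ℝ =>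
      (∑ i, (y i) ^ (2 * k * l)) ^ ((1 : ℝ) / l)) :=
  stmt_0_general k l p hk hl
end

section
/- Let k, l, p be positive integers and f(y₁,…,y_p) = (y₁^{2kl} + … + y_p^{2kl})^{1/l}. Then every partial derivative of f of order at most k vanishes at the origin 0 ∈ ℝ^p. -/
/-!
The function `f` is positively homogeneous of degree `2k`: `f (2 • y) = 2 ^ (2k) • f y`.
Differentiating `j` times, `D^j f (2 • y) = 2 ^ (2k - j) • D^j f y`, and at `y = 0` this reads
`D^j f 0 = 2 ^ (2k - j) • D^j f 0`, which forces `D^j f 0 = 0` as soon as `j < 2k`. The transfer of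
homogeneity to derivatives needs no smoothness, since `fderiv` of a function that is not
differentiable is `0`, which is compatible with the scaling.
-/

section Homogeneous

variable {𝕜 E F : Type*} [NontriviallyNormedField 𝕜] [NormedAddCommGroup E] [NormedSpace 𝕜 E]
  [NormedAddCommGroup F] [NormedSpace 𝕜 F] {g : E → F} {c a : 𝕜}

theorem fderiv_apply_smul_of_comp_smul_eq_smul (hc : c ≠ 0) (hg : ∀ x, g (c • x) = a • g x)
    (x : E) : fderiv 𝕜 g (c • x) = (c⁻¹ * a) • fderiv 𝕜 g x := by
  have key : c • fderiv 𝕜 g (c • x) = a • fderiv 𝕜 g x := by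
    rw [← fderiv_comp_smul, show (g <| c • ·) = a • g from funext hg, fderiv_const_smul_field,
      Pi.smul_apply]
  rw [mul_smul, ← key, inv_smul_smul₀ hc]

theorem iteratedFDeriv_apply_smul_of_comp_smul_eq_smul (hc : c ≠ 0)
    (hg : ∀ x, g (c • x) = a • g x) (n : ℕ) (x : E) :
    iteratedFDeriv 𝕜 n g (c • x) = (c⁻¹ ^ n * a) • iteratedFDeriv 𝕜 n g x := by
  induction n generalizing x with
  | zero => ext; simp [hg]
  | succ n ih =>
    have hstep := fderiv_apply_smul_of_comp_smul_eq_smul (g := iteratedFDeriv 𝕜 n g) hc ih x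
    simp only [iteratedFDeriv_succ_eq_comp_left, Function.comp_apply, hstep, map_smul, pow_succ',
      mul_assoc]

theorem iteratedFDeriv_zero_eq_zero_of_comp_smul_eq_smul (hc : c ≠ 0)
    (hg : ∀ x, g (c • x) = a • g x) {n : ℕ} (hn : c⁻¹ ^ n * a ≠ 1) :
    iteratedFDeriv 𝕜 n g 0 = 0 := by
  have h := iteratedFDeriv_apply_smul_of_comp_smul_eq_smul hc hg n 0
  rw [smul_zero] at h
  have : (c⁻¹ ^ n * a - 1) • iteratedFDeriv 𝕜 n g 0 = 0 := by
    rw [sub_smul, one_smul, ← h, sub_self]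
  exact (smul_eq_zero.mp this).resolve_left (sub_ne_zero.mpr hn)

end Homogeneous

theorem rpow_inv_sum_pow_smul {ι : Type*} [Fintype ι] (m l : ℕ) (hl : 0 < l) {t : ℝ}
    (ht : 0 ≤ t) (y : ι → ℝ) :
    (∑ i, ((t • y) i) ^ (2 * m * l)) ^ ((1 : ℝ) / l)
      = t ^ (2 * m) • (∑ i, (y i) ^ (2 * m * l)) ^ ((1 : ℝ) / l) := by
  have hsum : 0 ≤ ∑ i, (y i) ^ (2 * m * l) :=
    Finset.sum_nonneg fun i _ => Even.pow_nonneg ⟨m * l, by ring⟩ _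
  have h1 : ∑ i, ((t • y) i) ^ (2 * m * l) = (t ^ (2 * m)) ^ l * ∑ i, (y i) ^ (2 * m * l) := by
    simp only [Finset.mul_sum, Pi.smul_apply, smul_eq_mul, mul_pow, ← pow_mul]
  rw [h1, Real.mul_rpow (by positivity) hsum, one_div,
    Real.pow_rpow_inv_natCast (by positivity) hl.ne', smul_eq_mul]

theorem stmt_1_general (k l p : ℕ) (hk : 0 < k) (hl : 0 < l) :
    ∀ j : ℕ, j ≤ k →
      iteratedFDeriv ℝ j
        (fun y : Fin p → ℝ => (∑ i, (y i) ^ (2 * k * l)) ^ ((1 : ℝ) / l)) 0 = 0 := by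
  intro j hj
  have hscale : (2 : ℝ)⁻¹ ^ j * 2 ^ (2 * k) ≠ 1 := by
    rw [inv_pow, Ne, inv_mul_eq_one₀ (by positivity)]
    exact (pow_lt_pow_right₀ one_lt_two (by omega)).ne
  exact iteratedFDeriv_zero_eq_zero_of_comp_smul_eq_smul two_ne_zero
    (fun y => rpow_inv_sum_pow_smul k l hl zero_le_two y) hscale

theorem stmt_1 (k l p : ℕ) (hk : 0 < k) (hl : 0 < l) (hp : 0 < p) :
    ∀ j : ℕ, j ≤ k →
      iteratedFDeriv ℝ j
        (fun y : Fin p → ℝ => (∑ i, (y i) ^ (2 * k * l)) ^ ((1 : ℝ) / l)) 0 = 0 :=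
  stmt_1_general k l p hk hl
end

section
/- Let k, l, p be positive integers, and let t, j, s₁,…,s_p, m₁,…,m_p be natural numbers with 0 ≤ t ≤ j ≤ k, s₁+…+s_p = t, m₁+…+m_p = j−t, and (2kl−1)sᵢ − mᵢ ≥ 0 for all i. Then for all (y₁,…,y_p) ∈ ℝ^p with not all yᵢ zero, |(y₁^{2kl}+…+y_p^{2kl})^{1/l − t} · y₁^{(2kl−1)s₁−m₁} ⋯ y_p^{(2kl−1)s_p−m_p}| ≤ p · (maxᵢ |yᵢ|)^{2k−j}. -/
theorem stmt_2 (k l p : ℕ) (hk : 0 < k) (hl : 0 < l) (hp : 0 < p)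
    (t j : ℕ) (s m : Fin p → ℕ)
    (htj : t ≤ j) (hjk : j ≤ k)
    (hs : ∑ i, s i = t) (hm : ∑ i, m i = j - t)
    (hsm : ∀ i, m i ≤ (2 * k * l - 1) * s i)
    (y : Fin p → ℝ) (hy : y ≠ 0) :
    |(∑ i, (y i) ^ (2 * k * l)) ^ ((1 : ℝ) / l - t) *
        ∏ i, (y i) ^ ((2 * k * l - 1) * s i - m i)| ≤
      p * (⨆ i, |y i|) ^ (2 * k - j) := by
  classical
  have hne : Nonempty (Fin p) := ⟨⟨0, hp⟩⟩
  set M := ⨆ i, |y i| with hMdef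
  obtain ⟨i0, hi0⟩ : ∃ i, y i ≠ 0 := by
    by_contra h; push_neg at h; exact hy (funext h)
  have hbdd : BddAbove (Set.range fun i => |y i|) := Set.Finite.bddAbove (Set.finite_range _)
  have hle : ∀ i, |y i| ≤ M := fun i => le_ciSup hbdd i
  have hMpos : 0 < M := lt_of_lt_of_le (abs_pos.mpr hi0) (hle i0)
  obtain ⟨im, him⟩ : ∃ i, |y i| = M := exists_eq_ciSup_of_finite
  -- even exponent
  have heven : Even (2 * k * l) := ⟨k * l, by ring⟩
  have hpowabs : ∀ (i : Fin p), y i ^ (2 * k * l) = |y i| ^ (2 * k * l) :=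
    fun i => (heven.pow_abs (y i)).symm
  set S := ∑ i, (y i) ^ (2 * k * l) with hSdef
  have hSeq : S = ∑ i, |y i| ^ (2 * k * l) := Finset.sum_congr rfl fun i _ => hpowabs i
  have hSpos : 0 < S := by
    rw [hSeq]
    refine Finset.sum_pos' (fun i _ => pow_nonneg (abs_nonneg _) _) ⟨i0, Finset.mem_univ _, ?_⟩
    exact pow_pos (abs_pos.mpr hi0) _
  have hSub : S ≤ (p : ℝ) * M ^ (2 * k * l) := by
    rw [hSeq]
    calc ∑ i, |y i| ^ (2 * k * l) ≤ (Finset.univ.card : ℕ) • (M ^ (2 * k * l)) :=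
          Finset.sum_le_card_nsmul _ _ _ (fun i _ => pow_le_pow_left₀ (abs_nonneg _) (hle i) _)
      _ = (p : ℝ) * M ^ (2 * k * l) := by simp [nsmul_eq_mul]
  have hSlb : M ^ (2 * k * l) ≤ S := by
    rw [hSeq, ← him]
    exact Finset.single_le_sum (f := fun i => |y i| ^ (2 * k * l)) (fun i _ => pow_nonneg (abs_nonneg _) _) (Finset.mem_univ im)
  -- exponents
  set e : Fin p → ℕ := fun i => (2 * k * l - 1) * s i - m i with hedef
  have htv : t ≤ 2 * k * l * t := Nat.le_mul_of_pos_left t (by positivity)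
  have hmt : j - t ≤ 2 * k * l * t - t := by
    calc j - t = ∑ i, m i := hm.symm
      _ ≤ ∑ i, (2 * k * l - 1) * s i := Finset.sum_le_sum fun i _ => hsm i
      _ = (2 * k * l - 1) * t := by rw [← Finset.mul_sum, hs]
      _ = 2 * k * l * t - t := by rw [Nat.sub_mul, one_mul]
  have hjle : j ≤ 2 * k * l * t := by
    revert htv hmt htj; generalize 2 * k * l * t = v; omega
  have hEsum : ∑ i, e i = 2 * k * l * t - j := by
    have h1 : ∑ i, e i = (∑ i, (2 * k * l - 1) * s i) - ∑ i, m i :=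
      Finset.sum_tsub_distrib Finset.univ (fun i _ => hsm i)
    rw [h1, ← Finset.mul_sum, hs, hm, Nat.sub_mul, one_mul]
    revert htv hjle htj; generalize 2 * k * l * t = v; omega
  -- bound |P|
  have hPabs : |∏ i, (y i) ^ (e i)| ≤ M ^ (∑ i, e i) := by
    rw [Finset.abs_prod, ← Finset.prod_pow_eq_pow_sum]
    refine Finset.prod_le_prod (fun i _ => abs_nonneg _) (fun i _ => ?_)
    rw [abs_pow]
    exact pow_le_pow_left₀ (abs_nonneg _) (hle i) _
  -- rpow bound on S
  have hl1 : (0:ℝ) < l := by exact_mod_cast hl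
  have hSr : S ^ ((1 : ℝ) / l - t) ≤ (p : ℝ) * M ^ ((2 * k : ℝ) - 2 * k * l * t) := by
    have hsplit : ((1 : ℝ) / l - t) = 1 / l + (-(t : ℝ)) := by ring
    rw [hsplit, Real.rpow_add hSpos]
    have h1 : S ^ ((1:ℝ)/l) ≤ ((p : ℝ) * M ^ (2 * k * l)) ^ ((1:ℝ)/l) :=
      Real.rpow_le_rpow hSpos.le hSub (by positivity)
    have h2 : S ^ (-(t:ℝ)) ≤ (M ^ (2 * k * l)) ^ (-(t:ℝ)) :=
      Real.rpow_le_rpow_of_nonpos (pow_pos hMpos _) hSlb (neg_nonpos.mpr (Nat.cast_nonneg t))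
    calc S ^ ((1:ℝ)/l) * S ^ (-(t:ℝ))
        ≤ ((p : ℝ) * M ^ (2 * k * l)) ^ ((1:ℝ)/l) * ((M ^ (2 * k * l)) ^ (-(t:ℝ))) := by
          exact mul_le_mul h1 h2 (Real.rpow_nonneg hSpos.le _) (Real.rpow_nonneg (by positivity) _)
      _ ≤ (p : ℝ) * M ^ ((2 * k : ℝ) - 2 * k * l * t) := by
          rw [Real.mul_rpow (by positivity) (by positivity)]
          rw [← Real.rpow_natCast M (2*k*l), ← Real.rpow_mul hMpos.le, ← Real.rpow_mul hMpos.le,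
            mul_assoc, ← Real.rpow_add hMpos]
          have hcast : ((2*k*l : ℕ) : ℝ) * ((1:ℝ)/l) + ((2*k*l : ℕ) : ℝ) * (-(t:ℝ))
              = (2 * k : ℝ) - 2 * k * l * t := by
            push_cast
            field_simp
            ring
          rw [hcast]
          have hple : (p:ℝ) ^ ((1:ℝ)/l) ≤ (p:ℝ) := by
            calc (p:ℝ) ^ ((1:ℝ)/l) ≤ (p:ℝ) ^ (1:ℝ) :=
                Real.rpow_le_rpow_of_exponent_le (by exact_mod_cast hp) (by
                  rw [div_le_one hl1]; exact_mod_cast hl)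
              _ = p := Real.rpow_one _
          exact mul_le_mul_of_nonneg_right hple (Real.rpow_nonneg hMpos.le _)
  -- combine
  have habs : |S ^ ((1 : ℝ) / l - t) * ∏ i, (y i) ^ (e i)|
      = S ^ ((1 : ℝ) / l - t) * |∏ i, (y i) ^ (e i)| := by
    rw [abs_mul, abs_of_nonneg (Real.rpow_nonneg hSpos.le _)]
  calc |S ^ ((1 : ℝ) / l - t) * ∏ i, (y i) ^ (e i)|
      = S ^ ((1 : ℝ) / l - t) * |∏ i, (y i) ^ (e i)| := habs
    _ ≤ ((p : ℝ) * M ^ ((2 * k : ℝ) - 2 * k * l * t)) * M ^ (∑ i, e i) := by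
        exact mul_le_mul hSr hPabs (abs_nonneg _) (by positivity)
    _ = (p : ℝ) * M ^ (2 * k - j) := by
        rw [hEsum, ← Real.rpow_natCast M (2*k*l*t - j), ← Real.rpow_natCast M (2*k - j),
          mul_assoc, ← Real.rpow_add hMpos]
        congr 2
        have c1 : ((2*k*l*t - j : ℕ) : ℝ) = (2*k*l*t : ℕ) - (j:ℕ) := by
          exact Nat.cast_sub hjle
        have c2 : ((2*k - j : ℕ) : ℝ) = (2*k : ℕ) - (j:ℕ) := by
          exact Nat.cast_sub (by omega)
        rw [c1, c2]
        push_cast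
        ring
end

section
/- Let k, l be positive integers and g(x,y) = x^{2k} y^{2k} / (x^{2kl} + y^{2kl})^{1/l} (with g(0,0)=0). Then every partial derivative of g of order at most k vanishes at (0,0). -/
/-!
The function is homogeneous of degree `2k`: `g (t • q) = t ^ (2k) * g q`. Differentiating this
identity `j` times at the origin gives `t ^ j • D = t ^ (2k) • D` for the `j`-th derivative `D`
of `g` at `0`, so `D = 0` as soon as `j < 2k`.
-/

section Homogeneous

variable {𝕜 E F : Type*} [NontriviallyNormedField 𝕜] [NormedAddCommGroup E] [NormedSpace 𝕜 E]
  [NormedAddCommGroup F] [NormedSpace 𝕜 F]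

/-- Unlike `iteratedFDeriv_comp_const_smul`, no smoothness of `f` is needed: scaling by `c ≠ 0`
is a linear automorphism. -/
theorem iteratedFDeriv_comp_const_smul_of_ne_zero {c : 𝕜} (hc : c ≠ 0) (f : E → F) (i : ℕ)
    (x : E) :
    iteratedFDeriv 𝕜 i (fun z ↦ f (c • z)) x = c ^ i • iteratedFDeriv 𝕜 i f (c • x) := by
  let e : E ≃L[𝕜] E := ContinuousLinearEquiv.smulLeft (Units.mk0 c hc)
  have he : ⇑e = (c • ·) := rfl
  have h := e.iteratedFDerivWithin_comp_right f uniqueDiffOn_univ (Set.mem_univ (e x)) i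
  rw [Set.preimage_univ, iteratedFDerivWithin_univ, iteratedFDerivWithin_univ, he,
    Function.comp_def] at h
  ext m
  rw [h, ContinuousMultilinearMap.compContinuousLinearMap_apply]
  simpa [he] using (iteratedFDeriv 𝕜 i f (c • x)).map_smul_univ (fun _ ↦ c) m

theorem iteratedFDeriv_const_smul_of_ne_zero {c : 𝕜} (hc : c ≠ 0) (f : E → F) (i : ℕ) (x : E) :
    iteratedFDeriv 𝕜 i (fun z ↦ c • f z) x = c • iteratedFDeriv 𝕜 i f x := by
  let e : F ≃L[𝕜] F := ContinuousLinearEquiv.smulLeft (Units.mk0 c hc)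
  have h := e.iteratedFDeriv_comp_left (f := f) (x := x) (i := i)
  ext m
  exact congrArg (· m) h

theorem iteratedFDeriv_zero_eq_zero_of_homogeneous {f : E → F} {c : 𝕜} (hc : c ≠ 0) {m i : ℕ}
    (hf : ∀ x, f (c • x) = c ^ m • f x) (hmi : c ^ i ≠ c ^ m) :
    iteratedFDeriv 𝕜 i f 0 = 0 := by
  have key : c ^ i • iteratedFDeriv 𝕜 i f 0 = c ^ m • iteratedFDeriv 𝕜 i f 0 :=
    calc c ^ i • iteratedFDeriv 𝕜 i f 0
        = iteratedFDeriv 𝕜 i (fun z ↦ f (c • z)) 0 := by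
          rw [iteratedFDeriv_comp_const_smul_of_ne_zero hc, smul_zero]
      _ = iteratedFDeriv 𝕜 i (fun z ↦ c ^ m • f z) 0 := by simp only [hf]
      _ = c ^ m • iteratedFDeriv 𝕜 i f 0 :=
          iteratedFDeriv_const_smul_of_ne_zero (pow_ne_zero m hc) f i 0
  have hsub : (c ^ i - c ^ m) • iteratedFDeriv 𝕜 i f 0 = 0 := by rw [sub_smul, key, sub_self]
  exact (smul_eq_zero.mp hsub).resolve_left (sub_ne_zero.mpr hmi)

end Homogeneous

theorem homogeneous_pow_div_rpow (k : ℕ) {l : ℕ} (hl : l ≠ 0) (t x y : ℝ) :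
    (t * x) ^ (2 * k) * (t * y) ^ (2 * k) /
        ((t * x) ^ (2 * k * l) + (t * y) ^ (2 * k * l)) ^ ((1 : ℝ) / l) =
      t ^ (2 * k) * (x ^ (2 * k) * y ^ (2 * k) /
        (x ^ (2 * k * l) + y ^ (2 * k * l)) ^ ((1 : ℝ) / l)) := by
  have hsum : (t * x) ^ (2 * k * l) + (t * y) ^ (2 * k * l)
      = (t ^ (2 * k)) ^ l * (x ^ (2 * k * l) + y ^ (2 * k * l)) := by ring
  have ht : 0 ≤ t ^ (2 * k) := (even_two_mul k).pow_nonneg t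
  have hxy : 0 ≤ x ^ (2 * k * l) + y ^ (2 * k * l) := by
    have h2kl : Even (2 * k * l) := (even_two_mul k).mul_right l
    exact add_nonneg (h2kl.pow_nonneg x) (h2kl.pow_nonneg y)
  have hroot : ((t ^ (2 * k)) ^ l) ^ ((1 : ℝ) / l) = t ^ (2 * k) := by
    rw [one_div, Real.pow_rpow_inv_natCast ht hl]
  rw [hsum, Real.mul_rpow (pow_nonneg ht l) hxy, hroot, mul_pow, mul_pow,
    mul_mul_mul_comm, mul_div_mul_comm, mul_self_div_self]

theorem stmt_4 (k l : ℕ) (hk : 0 < k) (hl : 0 < l) :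
    ∀ j : ℕ, j ≤ k →
      iteratedFDeriv ℝ j
        (fun q : ℝ × ℝ =>
          q.1 ^ (2 * k) * q.2 ^ (2 * k) /
            (q.1 ^ (2 * k * l) + q.2 ^ (2 * k * l)) ^ ((1 : ℝ) / l)) (0, 0) = 0 := by
  intro j hj
  have hdeg : (2 : ℝ) ^ j ≠ 2 ^ (2 * k) := (pow_lt_pow_right₀ one_lt_two (by omega)).ne
  exact iteratedFDeriv_zero_eq_zero_of_homogeneous two_ne_zero
    (fun q ↦ homogeneous_pow_div_rpow k hl.ne' 2 q.1 q.2) hdeg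
end

section
/- Let k, l be positive integers and define h : ℝ² → ℝ by h(x,y) = x^{4k} / (x^{2kl} + y^{2kl})^{1/l} for (x,y) ≠ (0,0) and h(0,0) = 0. Then h is of class C^k on ℝ² and all its partial derivatives of order at most k vanish at (0,0). -/
open scoped ContDiff Topology
open Filter Asymptotics

section Homog

variable {E : Type} [NormedAddCommGroup E] [NormedSpace ℝ E]

lemma homog_zero {m : ℕ} {F : Type*} [NormedAddCommGroup F] [NormedSpace ℝ F] {f : E → F}
    (hf : ∀ (t : ℝ) (x : E), f (t • x) = t ^ (m + 1) • f x) : f 0 = 0 := by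
  have h := hf 0 0
  simpa using h

lemma homog_bound [FiniteDimensional ℝ E] {m : ℕ} {F : Type*} [NormedAddCommGroup F]
    [NormedSpace ℝ F] {f : E → F}
    (hf : ∀ (t : ℝ) (x : E), f (t • x) = t ^ (m + 1) • f x)
    (hc : ∀ x : E, x ≠ 0 → ContinuousAt f x) :
    ∃ C : ℝ, ∀ x : E, ‖f x‖ ≤ C * ‖x‖ ^ (m + 1) := by
  have hcont : ContinuousOn f (Metric.sphere (0 : E) 1) := by
    intro x hx
    have hx0 : x ≠ 0 := by
      intro h
      rw [Metric.mem_sphere, h] at hx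
      simp at hx
    exact (hc x hx0).continuousWithinAt
  obtain ⟨C, hC⟩ := (isCompact_sphere (0 : E) 1).exists_bound_of_continuousOn hcont
  refine ⟨max C 0, fun x => ?_⟩
  rcases eq_or_ne x 0 with rfl | hx
  · simp [homog_zero hf]
  · have hn : ‖x‖ ≠ 0 := norm_ne_zero_iff.mpr hx
    have hnpos : 0 < ‖x‖ := norm_pos_iff.mpr hx
    have hu : ‖x‖⁻¹ • x ∈ Metric.sphere (0 : E) 1 := by
      simp [norm_smul, abs_of_nonneg (inv_nonneg.mpr hnpos.le), inv_mul_cancel₀ hn]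
    have hfx : f x = ‖x‖ ^ (m + 1) • f (‖x‖⁻¹ • x) := by
      have h := hf ‖x‖ (‖x‖⁻¹ • x)
      rw [smul_smul, mul_inv_cancel₀ hn, one_smul] at h
      exact h
    rw [hfx, norm_smul, norm_pow, norm_norm]
    have h1 : ‖f (‖x‖⁻¹ • x)‖ ≤ max C 0 := le_trans (hC _ hu) (le_max_left _ _)
    calc ‖x‖ ^ (m + 1) * ‖f (‖x‖⁻¹ • x)‖ ≤ ‖x‖ ^ (m + 1) * max C 0 := by
          exact mul_le_mul_of_nonneg_left h1 (by positivity)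
      _ = max C 0 * ‖x‖ ^ (m + 1) := by ring

lemma homog_contDiff [FiniteDimensional ℝ E] :
    ∀ (m : ℕ) {F : Type} [NormedAddCommGroup F] [NormedSpace ℝ F] (f : E → F),
      (∀ (t : ℝ) (x : E), f (t • x) = t ^ (m + 1) • f x) →
      (∀ x : E, x ≠ 0 → ContDiffAt ℝ ∞ f x) →
      ContDiff ℝ m f ∧ ∀ j ≤ m, iteratedFDeriv ℝ j f 0 = 0 := by
  intro m
  induction m with
  | zero =>
    intro F _ _ f hf hs
    obtain ⟨C, hC⟩ := homog_bound hf (fun x hx => (hs x hx).continuousAt)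
    have hcont : Continuous f := by
      rw [continuous_iff_continuousAt]
      intro x
      rcases eq_or_ne x 0 with rfl | hx
      · have htd : Filter.Tendsto f (𝓝 0) (𝓝 0) := by
          apply squeeze_zero_norm hC
          have : Continuous fun x : E => C * ‖x‖ ^ (0 + 1) := by fun_prop
          have h0 := this.tendsto 0
          simpa using h0
        unfold ContinuousAt
        rwa [homog_zero hf]
      · exact (hs x hx).continuousAt
    constructor
    · simpa [contDiff_zero] using hcont
    · intro j hj
      interval_cases j
      ext v
      simp [homog_zero hf]
  | succ m ih =>
    intro F _ _ f hf hs
    obtain ⟨C, hC⟩ := homog_bound hf (fun x hx => (hs x hx).continuousAt)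
    -- derivative at 0 is 0
    have hdiff0 : HasFDerivAt f (0 : E →L[ℝ] F) 0 := by
      rw [hasFDerivAt_iff_isLittleO_nhds_zero]
      simp only [zero_add, homog_zero hf, sub_zero, ContinuousLinearMap.zero_apply]
      have h1 : f =O[𝓝 (0 : E)] fun x : E => ‖x‖ ^ (m + 1 + 1) := by
        apply IsBigO.of_bound C
        filter_upwards with x
        simpa using hC x
      exact h1.trans_isLittleO (isLittleO_norm_pow_id (by omega))
    have hdiff : ∀ x : E, DifferentiableAt ℝ f x := by
      intro x
      rcases eq_or_ne x 0 with rfl | hx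
      · exact hdiff0.differentiableAt
      · exact (hs x hx).differentiableAt (by norm_num)
    have hg0 : fderiv ℝ f 0 = 0 := hdiff0.fderiv
    have hghom : ∀ (t : ℝ) (x : E), fderiv ℝ f (t • x) = t ^ (m + 1) • fderiv ℝ f x := by
      intro t x
      rcases eq_or_ne t 0 with rfl | ht
      · simp [hg0]
      · have h1 : HasFDerivAt (fun y => f (t • y))
            ((fderiv ℝ f (t • x)).comp (t • ContinuousLinearMap.id ℝ E)) x :=
          (hdiff (t • x)).hasFDerivAt.comp x ((hasFDerivAt_id x).const_smul t)
        have h2 : HasFDerivAt (fun y => t ^ (m + 1 + 1) • f y)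
            (t ^ (m + 1 + 1) • fderiv ℝ f x) x := (hdiff x).hasFDerivAt.const_smul _
        have heq : (fun y => f (t • y)) = fun y => t ^ (m + 1 + 1) • f y :=
          funext fun y => hf t y
        rw [heq] at h1
        have huniq := h1.unique h2
        have h3 : (fderiv ℝ f (t • x)).comp (t • ContinuousLinearMap.id ℝ E)
            = t • fderiv ℝ f (t • x) := by
          ext v
          simp
        rw [h3] at huniq
        have h4 := congrArg (fun z => t⁻¹ • z) huniq
        simp only [smul_smul, inv_mul_cancel₀ ht, one_smul] at h4
        rw [h4]
        congr 1
        field_simp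
        ring
    have hgs : ∀ x : E, x ≠ 0 → ContDiffAt ℝ ∞ (fderiv ℝ f) x := by
      intro x hx
      exact (hs x hx).fderiv_right (by simp)
    obtain ⟨hgc, hgz⟩ := ih (fderiv ℝ f) hghom hgs
    constructor
    · have hcast : ((m + 1 : ℕ) : WithTop ℕ∞) = (m : WithTop ℕ∞) + 1 := by push_cast; ring
      rw [hcast, contDiff_succ_iff_fderiv]
      refine ⟨fun x => hdiff x, ?_, hgc⟩
      intro h
      exfalso
      exact (by simp : (m : WithTop ℕ∞) ≠ ω) h
    · intro j hj
      match j with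
      | 0 =>
        ext v
        simp [homog_zero hf]
      | (i + 1) =>
        have hi : i ≤ m := by omega
        rw [iteratedFDeriv_succ_eq_comp_right]
        simp only [Function.comp_apply]
        rw [hgz i hi]
        exact (continuousMultilinearCurryRightEquiv' ℝ i E F).symm.map_zero

end Homog

theorem stmt_5 (k l : ℕ) (hk : 0 < k) (hl : 0 < l) :
    ContDiff ℝ k (fun q : ℝ × ℝ =>
        q.1 ^ (4 * k) / (q.1 ^ (2 * k * l) + q.2 ^ (2 * k * l)) ^ ((1 : ℝ) / l)) ∧
      ∀ j : ℕ, j ≤ k →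
        iteratedFDeriv ℝ j
          (fun q : ℝ × ℝ =>
            q.1 ^ (4 * k) /
              (q.1 ^ (2 * k * l) + q.2 ^ (2 * k * l)) ^ ((1 : ℝ) / l)) (0, 0) = 0 := by
  set f : ℝ × ℝ → ℝ := fun q =>
    q.1 ^ (4 * k) / (q.1 ^ (2 * k * l) + q.2 ^ (2 * k * l)) ^ ((1 : ℝ) / l) with hfdef
  have hl0 : (l : ℝ) ≠ 0 := Nat.cast_ne_zero.mpr hl.ne'
  -- homogeneity of degree 2k
  have hom : ∀ (t : ℝ) (q : ℝ × ℝ), f (t • q) = t ^ (2 * k) • f q := by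
    intro t q
    rcases eq_or_ne t 0 with rfl | ht
    · have h1 : (0 : ℝ) ^ (4 * k) = 0 := zero_pow (by omega)
      have h2 : (0 : ℝ) ^ (2 * k * l) = 0 := zero_pow (Nat.mul_ne_zero (by omega) hl.ne')
      have h3 : (0 : ℝ) ^ (2 * k) = 0 := zero_pow (by omega)
      simp [hfdef, h1, h2, h3]
    · have hT : (0 : ℝ) < t ^ (2 * k) := by
        have h : t ^ (2 * k) = (t ^ k) ^ 2 := by rw [← pow_mul]; ring_nf
        have hk0 : t ^ k ≠ 0 := pow_ne_zero _ ht
        rw [h]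
        positivity
      have hsum : (0 : ℝ) ≤ q.1 ^ (2 * k * l) + q.2 ^ (2 * k * l) := by
        have e1 : q.1 ^ (2 * k * l) = (q.1 ^ (k * l)) ^ 2 := by rw [← pow_mul]; ring_nf
        have e2 : q.2 ^ (2 * k * l) = (q.2 ^ (k * l)) ^ 2 := by rw [← pow_mul]; ring_nf
        rw [e1, e2]; positivity
      have hden : ((t • q).1 ^ (2 * k * l) + (t • q).2 ^ (2 * k * l)) ^ ((1 : ℝ) / l)
          = t ^ (2 * k) * (q.1 ^ (2 * k * l) + q.2 ^ (2 * k * l)) ^ ((1 : ℝ) / l) := by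
        have hsm1 : (t • q).1 = t * q.1 := rfl
        have hsm2 : (t • q).2 = t * q.2 := rfl
        rw [hsm1, hsm2, mul_pow, mul_pow, ← mul_add]
        rw [Real.mul_rpow (by rw [show 2 * k * l = 2 * (k * l) by ring, pow_mul]; positivity) hsum]
        congr 1
        have e3 : t ^ (2 * k * l) = (t ^ (2 * k)) ^ l := by rw [← pow_mul]
        rw [e3, ← Real.rpow_natCast (t ^ (2 * k)) l, ← Real.rpow_mul hT.le]
        rw [mul_one_div, div_self hl0, Real.rpow_one]
      have hnum : (t • q).1 ^ (4 * k) = t ^ (2 * k) * (t ^ (2 * k) * q.1 ^ (4 * k)) := by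
        have hsm1 : (t • q).1 = t * q.1 := rfl
        rw [hsm1, mul_pow, show 4 * k = 2 * k + 2 * k by omega, pow_add]
        ring
      show (t • q).1 ^ (4 * k) / ((t • q).1 ^ (2 * k * l) + (t • q).2 ^ (2 * k * l))
          ^ ((1 : ℝ) / l) = t ^ (2 * k) • (q.1 ^ (4 * k)
          / (q.1 ^ (2 * k * l) + q.2 ^ (2 * k * l)) ^ ((1 : ℝ) / l))
      rw [hnum, hden, smul_eq_mul]
      rw [mul_div_mul_left _ _ hT.ne', mul_div_assoc]
  -- smoothness away from 0
  have hsmooth : ∀ q : ℝ × ℝ, q ≠ 0 → ContDiffAt ℝ ∞ f q := by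
    intro q hq
    have hspos : (0 : ℝ) < q.1 ^ (2 * k * l) + q.2 ^ (2 * k * l) := by
      have hq12 : q.1 ≠ 0 ∨ q.2 ≠ 0 := by
        by_contra h
        push_neg at h
        exact hq (Prod.ext h.1 h.2)
      have e1 : q.1 ^ (2 * k * l) = (q.1 ^ (k * l)) ^ 2 := by rw [← pow_mul]; ring_nf
      have e2 : q.2 ^ (2 * k * l) = (q.2 ^ (k * l)) ^ 2 := by rw [← pow_mul]; ring_nf
      rcases hq12 with h | h
      · have : (0 : ℝ) < (q.1 ^ (k * l)) ^ 2 := by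
          have : q.1 ^ (k * l) ≠ 0 := pow_ne_zero _ h
          positivity
        rw [e1, e2]
        nlinarith [sq_nonneg (q.2 ^ (k * l))]
      · have : (0 : ℝ) < (q.2 ^ (k * l)) ^ 2 := by
          have : q.2 ^ (k * l) ≠ 0 := pow_ne_zero _ h
          positivity
        rw [e1, e2]
        nlinarith [sq_nonneg (q.1 ^ (k * l))]
    have hbase : ContDiffAt ℝ ∞ (fun q : ℝ × ℝ => q.1 ^ (2 * k * l) + q.2 ^ (2 * k * l)) q :=
      ((contDiff_fst.pow _).add (contDiff_snd.pow _)).contDiffAt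
    apply ContDiffAt.div
    · exact (contDiff_fst.pow _).contDiffAt
    · exact hbase.rpow_const_of_ne hspos.ne'
    · exact (Real.rpow_pos_of_pos hspos _).ne'
  have key := homog_contDiff (2 * k - 1) f
    (by intro t q; rw [show 2 * k - 1 + 1 = 2 * k by omega]; exact hom t q) hsmooth
  constructor
  · exact key.1.of_le (by exact_mod_cast Nat.cast_le.mpr (by omega : k ≤ 2 * k - 1))
  · intro j hj
    have h0 : ((0, 0) : ℝ × ℝ) = 0 := rfl
    rw [h0]
    exact key.2 j (by omega)
end

section
/- Let U ⊆ ℝⁿ be open and k, l positive integers. If v₁, v₂ : U → ℝ are nonnegative functions with v₁^{1/(2kl)}, v₂^{1/(2kl)} of class C^k on U, then the function (v₁v₂/(v₁+v₂))^{1/l}, defined to be 0 at points where v₁ = v₂ = 0, is of class C^k on U. -/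
/-!
Put `uᵢ = vᵢ ^ (1 / (2kl))`, so that the function is `ψ(u₁, u₂)` with
`ψ(a, b) = a^(2k) b^(2k) / (a^(2kl) + b^(2kl))^(1/l)`. The map `ψ` is smooth away from the
origin and homogeneous of degree `2k`. A function homogeneous of degree `d` that is `C^m` off
the origin, `m < d`, is `C^m` everywhere: it is `O(‖x‖^d)`, hence continuous, and for `d ≥ 2`
differentiable at `0` with derivative `0`; its directional derivatives are homogeneous of degree
`d - 1`, so induction on `m` applies. Hence `ψ` is `C^k`, and so is `ψ ∘ (u₁, u₂)`.
-/

open Asymptotics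

section Homogeneous

variable {E F : Type*} [NormedAddCommGroup E] [NormedSpace ℝ E] [NormedAddCommGroup F]
  [NormedSpace ℝ F] {d : ℕ} {f : E → F}

theorem map_zero_of_homogeneous (hd : 0 < d) (hhom : ∀ (t : ℝ) x, f (t • x) = t ^ d • f x) :
    f 0 = 0 := by
  simpa [zero_pow hd.ne'] using hhom 0 0

theorem exists_norm_le_of_homogeneous [FiniteDimensional ℝ E] (hd : 0 < d)
    (hhom : ∀ (t : ℝ) x, f (t • x) = t ^ d • f x) (hf : ContinuousOn f {0}ᶜ) :
    ∃ C, ∀ x, ‖f x‖ ≤ C * ‖x‖ ^ d := by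
  obtain ⟨C, hC⟩ := (isCompact_sphere (0 : E) 1).exists_bound_of_continuousOn
    (hf.mono fun x hx (h : x = 0) => by simp [h] at hx)
  refine ⟨C, fun x => ?_⟩
  rcases eq_or_ne x 0 with rfl | hx
  · simp [map_zero_of_homogeneous hd hhom, zero_pow hd.ne']
  · have hxn : ‖x‖ ≠ 0 := norm_ne_zero_iff.2 hx
    have hfx : f x = ‖x‖ ^ d • f (‖x‖⁻¹ • x) := by
      rw [← hhom, smul_inv_smul₀ hxn]
    have hu : ‖f (‖x‖⁻¹ • x)‖ ≤ C := hC _ (by simp [norm_smul, hxn])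
    rw [hfx, norm_smul, norm_pow, norm_norm, mul_comm]
    gcongr

theorem continuous_of_homogeneous [FiniteDimensional ℝ E] (hd : 0 < d)
    (hhom : ∀ (t : ℝ) x, f (t • x) = t ^ d • f x) (hf : ContinuousOn f {0}ᶜ) :
    Continuous f := by
  obtain ⟨C, hC⟩ := exists_norm_le_of_homogeneous hd hhom hf
  refine continuous_iff_continuousAt.2 fun x => ?_
  rcases eq_or_ne x 0 with rfl | hx
  · rw [ContinuousAt, map_zero_of_homogeneous hd hhom]
    refine squeeze_zero_norm hC ?_
    exact Continuous.tendsto' (by fun_prop) 0 0 (by simp [zero_pow hd.ne'])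
  · exact hf.continuousAt (isOpen_compl_singleton.mem_nhds hx)

theorem hasFDerivAt_zero_of_homogeneous [FiniteDimensional ℝ E] (hd : 1 < d)
    (hhom : ∀ (t : ℝ) x, f (t • x) = t ^ d • f x) (hf : ContinuousOn f {0}ᶜ) :
    HasFDerivAt f (0 : E →L[ℝ] F) 0 := by
  obtain ⟨C, hC⟩ := exists_norm_le_of_homogeneous (by omega) hhom hf
  rw [hasFDerivAt_iff_isLittleO_nhds_zero]
  simp only [zero_add, map_zero_of_homogeneous (by omega : 0 < d) hhom, sub_zero,
    zero_apply]
  exact (isBigO_of_le' _ fun x => by simpa using hC x).trans_isLittleO (isLittleO_norm_pow_id hd)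

theorem differentiable_of_homogeneous [FiniteDimensional ℝ E] (hd : 1 < d)
    (hhom : ∀ (t : ℝ) x, f (t • x) = t ^ d • f x) (hf : DifferentiableOn ℝ f {0}ᶜ) :
    Differentiable ℝ f := by
  intro x
  rcases eq_or_ne x 0 with rfl | hx
  · exact (hasFDerivAt_zero_of_homogeneous hd hhom hf.continuousOn).differentiableAt
  · exact hf.differentiableAt (isOpen_compl_singleton.mem_nhds hx)

theorem fderiv_smul_apply_of_homogeneous [FiniteDimensional ℝ E] (hd : 0 < d)
    (hhom : ∀ (t : ℝ) x, f (t • x) = t ^ (d + 1) • f x) (hf : Differentiable ℝ f)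
    (t : ℝ) (x y : E) : fderiv ℝ f (t • x) y = t ^ d • fderiv ℝ f x y := by
  rcases eq_or_ne t 0 with rfl | ht
  · have h0 := (hasFDerivAt_zero_of_homogeneous (by omega) hhom hf.continuous.continuousOn).fderiv
    simp [h0, zero_pow hd.ne']
  · have hcomp : HasFDerivAt (fun y => f (t • y))
        ((fderiv ℝ f (t • x)).comp (t • ContinuousLinearMap.id ℝ E)) x :=
      (hf _).hasFDerivAt.comp x ((hasFDerivAt_id x).const_smul t)
    have hscale : HasFDerivAt (fun y => f (t • y)) (t ^ (d + 1) • fderiv ℝ f x) x := by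
      rw [funext (hhom t)]
      exact (hf x).hasFDerivAt.const_smul _
    have key := congrArg (· y) (hcomp.unique hscale)
    simp only [ContinuousLinearMap.comp_apply, smul_apply,
      ContinuousLinearMap.id_apply, map_smul, pow_succ', mul_smul] at key
    exact smul_right_injective F ht key

theorem contDiff_of_homogeneous [FiniteDimensional ℝ E] {m : ℕ} (hmd : m < d)
    (hhom : ∀ (t : ℝ) x, f (t • x) = t ^ d • f x) (hf : ContDiffOn ℝ m f {0}ᶜ) :
    ContDiff ℝ m f := by
  induction m generalizing d f with
  | zero => exact contDiff_zero.2 (continuous_of_homogeneous hmd hhom hf.continuousOn)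
  | succ m ih =>
    obtain ⟨d, rfl⟩ : ∃ d', d = d' + 1 := ⟨d - 1, by omega⟩
    have hdiff := differentiable_of_homogeneous (by omega) hhom (hf.differentiableOn (by simp))
    rw [Nat.cast_succ, contDiff_succ_iff_fderiv_apply]
    refine ⟨hdiff, by simp, fun y => ih (by omega)
      (fun t x => fderiv_smul_apply_of_homogeneous (by omega) hhom hdiff t x y) ?_⟩
    exact (hf.fderiv_of_isOpen isOpen_compl_singleton le_rfl).clm_apply contDiffOn_const

end Homogeneous

/-- With `vᵢ = uᵢ ^ (2 * k * l)` this is `(v₁ * v₂ / (v₁ + v₂)) ^ (1 / l)`, written in the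
`uᵢ`. -/
noncomputable def parallelSumRoot (k l : ℕ) (u : ℝ × ℝ) : ℝ :=
  u.1 ^ (2 * k) * u.2 ^ (2 * k) / (u.1 ^ (2 * k * l) + u.2 ^ (2 * k * l)) ^ ((1 : ℝ) / l)

theorem parallelSumRoot_smul {k l : ℕ} (hl : 0 < l) (t : ℝ) (u : ℝ × ℝ) :
    parallelSumRoot k l (t • u) = t ^ (2 * k) • parallelSumRoot k l u := by
  obtain ⟨a, b⟩ := u
  have hpow : Even (2 * k * l) := (even_two_mul k).mul_right l
  have hroot : (t ^ (2 * k * l)) ^ ((1 : ℝ) / l) = t ^ (2 * k) := by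
    rw [pow_mul, one_div, Real.pow_rpow_inv_natCast ((even_two_mul k).pow_nonneg t) hl.ne']
  have hsum : 0 ≤ a ^ (2 * k * l) + b ^ (2 * k * l) :=
    add_nonneg (hpow.pow_nonneg a) (hpow.pow_nonneg b)
  simp only [parallelSumRoot, Prod.smul_mk, smul_eq_mul, mul_pow]
  rw [← mul_add, Real.mul_rpow (hpow.pow_nonneg t) hsum, hroot, mul_mul_mul_comm, mul_assoc]
  rcases eq_or_ne (t ^ (2 * k)) 0 with ht | ht
  · simp [ht]
  · rw [mul_div_mul_left _ _ ht, mul_div_assoc]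

theorem contDiffOn_parallelSumRoot {k l : ℕ} {n : WithTop ℕ∞} :
    ContDiffOn ℝ n (parallelSumRoot k l) {0}ᶜ := by
  intro u hu
  have hpow : Even (2 * k * l) := (even_two_mul k).mul_right l
  have hsum : 0 < u.1 ^ (2 * k * l) + u.2 ^ (2 * k * l) := by
    by_cases h : u.1 = 0
    · have : u.2 ≠ 0 := fun h' => hu (Prod.ext h h')
      exact add_pos_of_nonneg_of_pos (hpow.pow_nonneg _) (hpow.pow_pos this)
    · exact add_pos_of_pos_of_nonneg (hpow.pow_pos h) (hpow.pow_nonneg _)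
  refine ContDiffAt.contDiffWithinAt ?_
  refine ContDiffAt.div (by fun_prop) ?_ (Real.rpow_pos_of_pos hsum _).ne'
  exact (Real.contDiffAt_rpow_const_of_ne (p := (1 : ℝ) / l) hsum.ne').comp u
    (f := fun u : ℝ × ℝ => u.1 ^ (2 * k * l) + u.2 ^ (2 * k * l)) (by fun_prop)

theorem parallelSumRoot_rpow {k l : ℕ} (hk : k ≠ 0) (hl : l ≠ 0) {a b : ℝ} (ha : 0 ≤ a)
    (hb : 0 ≤ b) :
    parallelSumRoot k l (a ^ ((1 : ℝ) / (2 * k * l)), b ^ ((1 : ℝ) / (2 * k * l))) =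
      (a * b / (a + b)) ^ ((1 : ℝ) / l) := by
  have hroot : ∀ c : ℝ, 0 ≤ c → (c ^ ((1 : ℝ) / (2 * k * l))) ^ (2 * k * l) = c ∧
      (c ^ ((1 : ℝ) / (2 * k * l))) ^ (2 * k) = c ^ ((1 : ℝ) / l) := by
    intro c hc
    constructor
    · have : (1 : ℝ) / (2 * k * l) = ((2 * k * l : ℕ) : ℝ)⁻¹ := by push_cast; ring
      rw [this, Real.rpow_inv_natCast_pow hc (by positivity)]
    · rw [← Real.rpow_natCast, ← Real.rpow_mul hc]
      congr 1
      push_cast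
      field_simp
  obtain ⟨ha₁, ha₂⟩ := hroot a ha
  obtain ⟨hb₁, hb₂⟩ := hroot b hb
  rw [parallelSumRoot, ha₁, ha₂, hb₁, hb₂,
    Real.div_rpow (mul_nonneg ha hb) (add_nonneg ha hb), Real.mul_rpow ha hb]

theorem stmt_8_general (n k l : ℕ) (hk : 0 < k) (hl : 0 < l)
    (U : Set (Fin n → ℝ))
    (v₁ v₂ : (Fin n → ℝ) → ℝ)
    (h₁ : ∀ x ∈ U, 0 ≤ v₁ x) (h₂ : ∀ x ∈ U, 0 ≤ v₂ x)
    (hv₁ : ContDiffOn ℝ k (fun x => (v₁ x) ^ ((1 : ℝ) / (2 * k * l))) U)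
    (hv₂ : ContDiffOn ℝ k (fun x => (v₂ x) ^ ((1 : ℝ) / (2 * k * l))) U) :
    ContDiffOn ℝ k
      (fun x => (v₁ x * v₂ x / (v₁ x + v₂ x)) ^ ((1 : ℝ) / l)) U := by
  have hψ : ContDiff ℝ k (parallelSumRoot k l) :=
    contDiff_of_homogeneous (by omega : k < 2 * k) (parallelSumRoot_smul hl)
      contDiffOn_parallelSumRoot
  refine (hψ.comp_contDiffOn (hv₁.prodMk hv₂)).congr fun x hx => ?_
  exact (parallelSumRoot_rpow hk.ne' hl.ne' (h₁ x hx) (h₂ x hx)).symm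

theorem stmt_8 (n k l : ℕ) (hk : 0 < k) (hl : 0 < l)
    (U : Set (Fin n → ℝ)) (hU : IsOpen U)
    (v₁ v₂ : (Fin n → ℝ) → ℝ)
    (h₁ : ∀ x ∈ U, 0 ≤ v₁ x) (h₂ : ∀ x ∈ U, 0 ≤ v₂ x)
    (hv₁ : ContDiffOn ℝ k (fun x => (v₁ x) ^ ((1 : ℝ) / (2 * k * l))) U)
    (hv₂ : ContDiffOn ℝ k (fun x => (v₂ x) ^ ((1 : ℝ) / (2 * k * l))) U) :
    ContDiffOn ℝ k
      (fun x => (v₁ x * v₂ x / (v₁ x + v₂ x)) ^ ((1 : ℝ) / l)) U :=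
  stmt_8_general n k l hk hl U v₁ v₂ h₁ h₂ hv₁ hv₂
end

section
/- Let U ⊆ ℝⁿ be open and k, l positive integers. If v₁, v₂ : U → ℝ are nonnegative with v₁^{1/(2kl)}, v₂^{1/(2kl)} of class C^k on U, then (v₁²/(v₁+v₂))^{1/l}, defined to be 0 where v₁ = v₂ = 0, is of class C^k on U. -/
/-!
Put f = v₁^{1/(2kl)} and g = v₂^{1/(2kl)}. Then (v₁²/(v₁+v₂))^{1/l} = f^{2k} Θ(f, g) with
Θ(z) = z₁^{2k} (z₁^{2kl} + z₂^{2kl})^{-1/l}, a function that is smooth away from the origin and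
invariant under positive dilations, hence bounded. For every such Θ, f^p Θ(f, g) is C^j as soon as
f, g are C^j and p > j, by induction on j: where f ≠ 0 the chain rule writes the derivative as
f^{p-1} times combinations of f' and g' whose coefficients have the same shape Θ̃(f, g), because
z₁ ∂Θ is again smooth and dilation invariant; where f = 0 the bound |f^p Θ(f, g)| ≤ C |f|^p with
p ≥ 2 forces the derivative to vanish.
-/

open scoped ContDiff Topology
open Asymptotics Filter

theorem hasFDerivAt_zero_of_norm_le_pow {E G : Type*} [NormedAddCommGroup E] [NormedSpace ℝ E]
    [NormedAddCommGroup G] [NormedSpace ℝ G] {F : E → G} {f : E → ℝ} {x : E} {C : ℝ} {p : ℕ}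
    (hf : DifferentiableAt ℝ f x) (hfx : f x = 0) (hp : 1 < p)
    (hF : ∀ᶠ y in 𝓝 x, ‖F y‖ ≤ C * |f y| ^ p) : HasFDerivAt F (0 : E →L[ℝ] G) x := by
  have hFx : F x = 0 := norm_le_zero_iff.mp (by simpa [hfx, zero_pow (by omega : p ≠ 0)]
    using hF.self_of_nhds)
  have hFf : F =O[𝓝 x] fun y => f y ^ p :=
    .of_bound C (hF.mono fun y hy => by simpa [abs_pow] using hy)
  have hfO : f =O[𝓝 x] fun y => y - x := by simpa [hfx] using hf.hasFDerivAt.isBigO_sub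
  refine .of_isLittleO ?_
  simpa [hFx] using (hFf.trans (hfO.norm_right.pow p)).trans_isLittleO (isLittleO_pow_sub_sub x hp)

structure IsSmoothZeroHomogeneous {F G : Type*} [NormedAddCommGroup F] [NormedSpace ℝ F]
    [NormedAddCommGroup G] [NormedSpace ℝ G] (Θ : F → G) : Prop where
  contDiffAt : ∀ z ≠ 0, ContDiffAt ℝ ∞ Θ z
  apply_smul : ∀ t : ℝ, 0 < t → ∀ z, Θ (t • z) = Θ z

namespace IsSmoothZeroHomogeneous

section

variable {F G : Type*} [NormedAddCommGroup F] [NormedSpace ℝ F]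
  [NormedAddCommGroup G] [NormedSpace ℝ G] {Θ : F → G}

theorem exists_bound [ProperSpace F] (hΘ : IsSmoothZeroHomogeneous Θ) :
    ∃ M, ∀ z, ‖Θ z‖ ≤ M := by
  obtain ⟨M, hM⟩ := (isCompact_sphere (0 : F) 1).exists_bound_of_continuousOn fun z hz =>
    (hΘ.contDiffAt z (ne_zero_of_mem_unit_sphere ⟨z, hz⟩)).continuousAt.continuousWithinAt
  refine ⟨max M ‖Θ 0‖, fun z => ?_⟩
  rcases eq_or_ne z 0 with rfl | hz
  · exact le_max_right _ _
  · have hnorm : 0 < ‖z‖ := norm_pos_iff.mpr hz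
    calc ‖Θ z‖ = ‖Θ (‖z‖⁻¹ • z)‖ := by rw [hΘ.apply_smul _ (inv_pos.mpr hnorm)]
      _ ≤ M := hM _ (by simp [norm_smul, hnorm.ne'])
      _ ≤ _ := le_max_left _ _

theorem smul_fderiv_smul (hΘ : IsSmoothZeroHomogeneous Θ) {t : ℝ} (ht : 0 < t) (z : F) :
    t • fderiv ℝ Θ (t • z) = fderiv ℝ Θ z := by
  have h := fderiv_comp_smul (f := Θ) (x := z) t
  rwa [show (Θ <| t • ·) = Θ from funext (hΘ.apply_smul t ht), eq_comm] at h

theorem smul_fderiv (hΘ : IsSmoothZeroHomogeneous Θ) (φ : F →L[ℝ] ℝ) (w : F) :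
    IsSmoothZeroHomogeneous fun z => φ z • fderiv ℝ Θ z w where
  contDiffAt z hz :=
    φ.contDiff.contDiffAt.smul
      (((hΘ.contDiffAt z hz).fderiv_right (m := ∞) (by simp)).clm_apply contDiffAt_const)
  apply_smul t ht z := by
    rw [map_smul, smul_eq_mul, mul_comm, mul_smul, ← smul_apply,
      hΘ.smul_fderiv_smul ht]

end

section

variable {Θ : ℝ × ℝ → ℝ}

theorem continuousOn_pow_mul_comp {X : Type*} [TopologicalSpace X] {f g : X → ℝ}
    (hΘ : IsSmoothZeroHomogeneous Θ) {s : Set X}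
    (hf : ContinuousOn f s) (hg : ContinuousOn g s) {p : ℕ} (hp : p ≠ 0) :
    ContinuousOn (fun x => f x ^ p * Θ (f x, g x)) s := by
  intro x hx
  by_cases hfx : f x = 0
  · obtain ⟨M, hM⟩ := hΘ.exists_bound
    have hlim : Tendsto (fun y => |f y| ^ p * M) (𝓝[s] x) (𝓝 0) := by
      simpa [ContinuousWithinAt, hfx, zero_pow hp] using ((hf x hx).abs.fun_pow p).mul_const M
    rw [ContinuousWithinAt, hfx, zero_pow hp, zero_mul]
    refine squeeze_zero_norm (fun y => ?_) hlim
    rw [norm_mul, norm_pow, Real.norm_eq_abs]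
    gcongr
    exact hM _
  · have hΘx := (hΘ.contDiffAt (f x, g x) (by simp [hfx])).continuousAt
    exact ((hf x hx).pow p).mul (hΘx.comp_continuousWithinAt (f := fun y => (f y, g y))
      ((hf x hx).prodMk (hg x hx)))

variable {E : Type*} [NormedAddCommGroup E] [NormedSpace ℝ E] {f g : E → ℝ}

theorem hasFDerivAt_pow_succ_mul_comp (hΘ : IsSmoothZeroHomogeneous Θ) {x : E}
    {f' g' : E →L[ℝ] ℝ} (hf : HasFDerivAt f f' x) (hg : HasFDerivAt g g' x) {q : ℕ} (hq : q ≠ 0) :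
    HasFDerivAt (fun y => f y ^ (q + 1) * Θ (f y, g y))
      ((f x ^ q * Θ (f x, g x) * (q + 1) +
          f x ^ q * (f x * fderiv ℝ Θ (f x, g x) (1, 0))) • f' +
        (f x ^ q * (f x * fderiv ℝ Θ (f x, g x) (0, 1))) • g') x := by
  by_cases hfx : f x = 0
  · obtain ⟨M, hM⟩ := hΘ.exists_bound
    simp only [hfx, zero_pow hq, zero_mul, zero_smul, add_zero]
    refine hasFDerivAt_zero_of_norm_le_pow (C := M) (p := q + 1) hf.differentiableAt hfx
      (by omega) (.of_forall fun y => ?_)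
    rw [norm_mul, norm_pow, Real.norm_eq_abs, mul_comm]
    exact mul_le_mul_of_nonneg_right (hM _) (by positivity)
  · have hΘx : HasFDerivAt Θ (fderiv ℝ Θ (f x, g x)) (f x, g x) :=
      ((hΘ.contDiffAt _ (by simp [hfx])).differentiableAt (by simp)).hasFDerivAt
    refine ((hf.pow (q + 1)).mul (hΘx.comp x (hf.prodMk hg))).congr_fderiv ?_
    have hsplit : ∀ a b : ℝ, fderiv ℝ Θ (f x, g x) (a, b) =
        a * fderiv ℝ Θ (f x, g x) (1, 0) + b * fderiv ℝ Θ (f x, g x) (0, 1) := fun a b => by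
      rw [← smul_eq_mul, ← smul_eq_mul, ← map_smul, ← map_smul, ← map_add]
      simp
    ext v
    simp only [add_apply, smul_apply, ContinuousLinearMap.comp_apply,
      ContinuousLinearMap.prod_apply, Function.comp_apply, smul_eq_mul, nsmul_eq_mul,
      Nat.add_sub_cancel]
    rw [hsplit]
    push_cast
    ring

theorem contDiffOn_pow_mul_comp (hΘ : IsSmoothZeroHomogeneous Θ) {U : Set E} (hU : IsOpen U)
    {j p : ℕ} (hjp : j < p) (hf : ContDiffOn ℝ j f U) (hg : ContDiffOn ℝ j g U) :
    ContDiffOn ℝ j (fun x => f x ^ p * Θ (f x, g x)) U := by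
  induction j generalizing p Θ f g with
  | zero =>
    simpa using hΘ.continuousOn_pow_mul_comp hf.continuousOn hg.continuousOn (by omega)
  | succ j ih =>
    obtain ⟨q, rfl⟩ : ∃ q, p = q + 1 := ⟨p - 1, by omega⟩
    rw [Nat.cast_succ] at hf hg ⊢
    have hf' := hf.fderiv_of_isOpen hU le_rfl
    have hg' := hg.fderiv_of_isOpen hU le_rfl
    have hfj := hf.of_succ
    have hgj := hg.of_succ
    have hderiv (x) (hx : x ∈ U) := hΘ.hasFDerivAt_pow_succ_mul_comp
      ((hf.differentiableOn (by simp)).differentiableAt (hU.mem_nhds hx)).hasFDerivAt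
      ((hg.differentiableOn (by simp)).differentiableAt (hU.mem_nhds hx)).hasFDerivAt
      (by omega : q ≠ 0)
    rw [contDiffOn_succ_iff_fderiv_of_isOpen hU]
    refine ⟨fun x hx => (hderiv x hx).differentiableAt.differentiableWithinAt, by simp, ?_⟩
    have h₀ := ih (p := q) hΘ (by omega) hfj hgj
    have h₁ := ih (p := q) (hΘ.smul_fderiv (.fst ℝ ℝ ℝ) (1, 0)) (by omega) hfj hgj
    have h₂ := ih (p := q) (hΘ.smul_fderiv (.fst ℝ ℝ ℝ) (0, 1)) (by omega) hfj hgj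
    exact ((((h₀.mul contDiffOn_const).add h₁).smul hf').add (h₂.smul hg')).congr
      fun x hx => (hderiv x hx).fderiv

end

end IsSmoothZeroHomogeneous

theorem isSmoothZeroHomogeneous_pow_mul_add_pow_rpow {a m : ℕ} {r : ℝ} (hm : Even m)
    (har : (a : ℝ) = m * r) :
    IsSmoothZeroHomogeneous fun z : ℝ × ℝ => z.1 ^ a * (z.1 ^ m + z.2 ^ m) ^ (-r) where
  contDiffAt z hz := by
    have hpos : 0 < z.1 ^ m + z.2 ^ m := by
      rcases z with ⟨z₁, z₂⟩
      rcases eq_or_ne z₁ 0 with rfl | h₁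
      · have h₂ : z₂ ≠ 0 := by rintro rfl; exact hz rfl
        exact add_pos_of_nonneg_of_pos (hm.pow_nonneg _) (hm.pow_pos h₂)
      · exact add_pos_of_pos_of_nonneg (hm.pow_pos h₁) (hm.pow_nonneg _)
    exact (contDiff_fst.pow a).contDiffAt.mul
      (((contDiff_fst.pow m).add (contDiff_snd.pow m)).contDiffAt.rpow_const_of_ne hpos.ne')
  apply_smul t ht z := by
    have hS : 0 ≤ z.1 ^ m + z.2 ^ m := add_nonneg (hm.pow_nonneg _) (hm.pow_nonneg _)
    have hta : (t ^ m : ℝ) ^ (-r) * t ^ a = 1 := by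
      rw [← Real.rpow_natCast, ← Real.rpow_natCast, ← Real.rpow_mul ht.le, har,
        ← Real.rpow_add ht]
      simp
    simp only [Prod.smul_fst, Prod.smul_snd, smul_eq_mul, mul_pow, ← mul_add]
    rw [Real.mul_rpow (by positivity) hS]
    linear_combination (z.1 ^ a * (z.1 ^ m + z.2 ^ m) ^ (-r)) * hta

theorem Real.sq_div_add_rpow {x y : ℝ} (hx : 0 ≤ x) (hy : 0 ≤ y) (r : ℝ) :
    (x ^ 2 / (x + y)) ^ r = x ^ r * (x ^ r * (x + y) ^ (-r)) := by
  rw [Real.div_rpow (by positivity) (by positivity), Real.rpow_neg (by positivity),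
    ← Real.rpow_pow_comm hx]
  ring

theorem stmt_9 (n k l : ℕ) (hk : 0 < k) (hl : 0 < l)
    (U : Set (Fin n → ℝ)) (hU : IsOpen U)
    (v₁ v₂ : (Fin n → ℝ) → ℝ)
    (h₁ : ∀ x ∈ U, 0 ≤ v₁ x) (h₂ : ∀ x ∈ U, 0 ≤ v₂ x)
    (hv₁ : ContDiffOn ℝ k (fun x => (v₁ x) ^ ((1 : ℝ) / (2 * k * l))) U)
    (hv₂ : ContDiffOn ℝ k (fun x => (v₂ x) ^ ((1 : ℝ) / (2 * k * l))) U) :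
    ContDiffOn ℝ k
      (fun x => (v₁ x ^ 2 / (v₁ x + v₂ x)) ^ ((1 : ℝ) / l)) U := by
  have hk' : (k : ℝ) ≠ 0 := by positivity
  have hl' : (l : ℝ) ≠ 0 := by positivity
  have hroot_pow {a : ℝ} (ha : 0 ≤ a) (j : ℕ) :
      (a ^ ((1 : ℝ) / (2 * k * l))) ^ j = a ^ ((j : ℝ) / (2 * k * l)) := by
    rw [← Real.rpow_natCast, ← Real.rpow_mul ha, one_div_mul_eq_div]
  have h2k : ((2 * k : ℕ) : ℝ) / (2 * k * l) = 1 / l := by push_cast; field_simp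
  have h2kl : ((2 * k * l : ℕ) : ℝ) / (2 * k * l) = 1 := by push_cast; field_simp
  have hΘ := isSmoothZeroHomogeneous_pow_mul_add_pow_rpow (a := 2 * k) (m := 2 * k * l)
    (r := 1 / l) ⟨k * l, by ring⟩ (by push_cast; field_simp)
  refine (hΘ.contDiffOn_pow_mul_comp hU (p := 2 * k) (by omega) hv₁ hv₂).congr fun x hx => ?_
  simp only [hroot_pow (h₁ x hx), hroot_pow (h₂ x hx), h2k, h2kl, Real.rpow_one]
  exact Real.sq_div_add_rpow (h₁ x hx) (h₂ x hx) _
end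

section
/- Let U ⊆ ℝⁿ be open, k ≥ 1 and l ≥ k+1 integers, and h : U → ℝ a function of class C^k. If g : U → ℝ is continuous and satisfies |g(x)| = |h(x)|^l for every x ∈ U, then g is of class C^k on U. -/
/-!
Near a point where `h ≠ 0`, continuity of `g` forces `g = c h^l` with a constant `c = ±1`.
Call `F` locally `h^l • ψ` if it vanishes on `{h = 0}` and is locally `c • h^l • ψ` with
`|c| ≤ 1` elsewhere. This class is stable under differentiation, with `l` lowered by one and
`ψ` replaced by `h Dψ + l Dh ⊗ ψ`: away from the zeros of `h` this is the product rule, and at a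
zero `z` the bound `‖F y‖ ≤ |h y|^l ‖ψ y‖ = O(‖y - z‖^l)` with `l ≥ 2` gives `DF z = 0`.
Hence, by induction on `k`, a function locally `h^l • ψ` with `k < l` and `h`, `ψ` of class
`C^k` is itself `C^k`, its `k`-th derivative being continuous as a function locally `h^(l-k) • ψ'`.
-/

open Filter Asymptotics Topology

section

variable {X E : Type*} [TopologicalSpace X] [NormedAddCommGroup E] [NormedSpace ℝ E]

def IsLocallyPowSMulOn (U : Set X) (h : X → ℝ) (l : ℕ) (ψ F : X → E) : Prop :=
  (∀ x ∈ U, h x = 0 → F x = 0) ∧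
    ∀ x ∈ U, h x ≠ 0 → ∃ c : ℝ, |c| ≤ 1 ∧ F =ᶠ[𝓝 x] fun y ↦ c • h y ^ l • ψ y

namespace IsLocallyPowSMulOn

variable {U : Set X} {h : X → ℝ} {l m : ℕ} {ψ F : X → E}

theorem norm_le (hF : IsLocallyPowSMulOn U h l ψ F) {x : X} (hx : x ∈ U) :
    ‖F x‖ ≤ |h x| ^ l * ‖ψ x‖ := by
  by_cases h0 : h x = 0
  · rw [hF.1 x hx h0, norm_zero]; positivity
  obtain ⟨c, hc, hFx⟩ := hF.2 x hx h0
  rw [hFx.eq_of_nhds, norm_smul, norm_smul, norm_pow, Real.norm_eq_abs, Real.norm_eq_abs]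
  exact mul_le_of_le_one_left (by positivity) hc

theorem continuousOn (hF : IsLocallyPowSMulOn U h l ψ F) (hU : IsOpen U) (hl : l ≠ 0)
    (hh : ContinuousOn h U) (hψ : ContinuousOn ψ U) : ContinuousOn F U := by
  intro x hx
  have hhx := hh.continuousAt (hU.mem_nhds hx)
  have hψx := hψ.continuousAt (hU.mem_nhds hx)
  refine ContinuousAt.continuousWithinAt ?_
  by_cases h0 : h x = 0
  · rw [ContinuousAt, hF.1 x hx h0]
    refine squeeze_zero_norm' ((hU.eventually_mem hx).mono fun y hy ↦ hF.norm_le hy) ?_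
    simpa [h0, hl] using (hhx.abs.tendsto.pow l).mul hψx.norm.tendsto
  obtain ⟨c, -, hFx⟩ := hF.2 x hx h0
  exact (continuousAt_const.smul ((hhx.pow l).smul hψx)).congr hFx.symm

end IsLocallyPowSMulOn

end

section

variable {X E : Type*} [NormedAddCommGroup X] [NormedSpace ℝ X]
  [NormedAddCommGroup E] [NormedSpace ℝ E]

noncomputable def powSMulDeriv (m : ℕ) (h : X → ℝ) (ψ : X → E) (x : X) : X →L[ℝ] E :=
  h x • fderiv ℝ ψ x + ((m : ℝ) + 1) • (fderiv ℝ h x).smulRight (ψ x)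

theorem hasFDerivAt_pow_succ_smul {h : X → ℝ} {ψ : X → E} {x : X} (m : ℕ)
    (hh : DifferentiableAt ℝ h x) (hψ : DifferentiableAt ℝ ψ x) :
    HasFDerivAt (fun y ↦ h y ^ (m + 1) • ψ y) (h x ^ m • powSMulDeriv m h ψ x) x := by
  convert (hh.hasFDerivAt.pow (m + 1)).fun_smul hψ.hasFDerivAt using 1
  ext v
  simp only [powSMulDeriv, smul_add, smul_smul, add_apply, smul_apply,
    ContinuousLinearMap.smulRight_apply, pow_succ, add_tsub_cancel_right, nsmul_eq_mul,
    Nat.cast_add, Nat.cast_one, smul_eq_mul, add_right_inj]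
  ring_nf

theorem ContDiffOn.powSMulDeriv {U : Set X} {h : X → ℝ} {ψ : X → E} {k : ℕ} (m : ℕ)
    (hU : IsOpen U) (hh : ContDiffOn ℝ (k + 1) h U) (hψ : ContDiffOn ℝ (k + 1) ψ U) :
    ContDiffOn ℝ k (powSMulDeriv m h ψ) U :=
  ((hh.of_le (by norm_cast; omega)).smul (hψ.fderiv_of_isOpen hU le_rfl)).add
    (((hh.fderiv_of_isOpen hU le_rfl).smulRight (hψ.of_le (by norm_cast; omega))).const_smul _)

theorem hasFDerivAt_zero_of_norm_le_abs_mul {F : X → E} {h : X → ℝ} {r : X → ℝ} {z : X}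
    {h' : X →L[ℝ] ℝ} (hh : HasFDerivAt h h' z) (hz : h z = 0) (hFz : F z = 0)
    (hr : Tendsto r (𝓝 z) (𝓝 0)) (hF : ∀ᶠ y in 𝓝 z, ‖F y‖ ≤ |h y| * r y) :
    HasFDerivAt F (0 : X →L[ℝ] E) z := by
  have hFO : F =O[𝓝 z] fun y ↦ h y * r y :=
    .of_bound' <| hF.mono fun y hy ↦ hy.trans <| by
      rw [norm_mul, Real.norm_eq_abs, Real.norm_eq_abs]
      gcongr
      exact le_abs_self _
  have hhO : h =O[𝓝 z] fun y ↦ y - z := by simpa [hz] using hh.isBigO_sub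
  have := hFO.trans_isLittleO ((isBigO_refl h (𝓝 z)).mul_isLittleO ((isLittleO_one_iff ℝ).2 hr))
  refine .of_isLittleO ?_
  simpa [hFz] using (this.trans_isBigO (by simpa using hhO))

namespace IsLocallyPowSMulOn

variable {U : Set X} {h : X → ℝ} {l m : ℕ} {ψ F : X → E}

theorem hasFDerivAt_of_eq_zero (hF : IsLocallyPowSMulOn U h (m + 1) ψ F) (hU : IsOpen U)
    (hm : m ≠ 0) (hh : DifferentiableOn ℝ h U) (hψ : ContinuousOn ψ U) {z : X} (hz : z ∈ U)
    (h0 : h z = 0) : HasFDerivAt F (0 : X →L[ℝ] E) z := by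
  have hhz := hh.differentiableAt (hU.mem_nhds hz)
  refine hasFDerivAt_zero_of_norm_le_abs_mul hhz.hasFDerivAt h0 (hF.1 z hz h0)
    (r := fun y ↦ |h y| ^ m * ‖ψ y‖) ?_ ?_
  · simpa [h0, hm] using
    (hhz.continuousAt.abs.tendsto.pow m).mul (hψ.continuousAt (hU.mem_nhds hz)).norm.tendsto
  · filter_upwards [hU.eventually_mem hz] with y hy
    rw [← mul_assoc, ← pow_succ']
    exact hF.norm_le hy

theorem eventually_hasFDerivAt_of_ne_zero (hF : IsLocallyPowSMulOn U h (m + 1) ψ F)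
    (hU : IsOpen U) (hh : DifferentiableOn ℝ h U) (hψ : DifferentiableOn ℝ ψ U) {x : X}
    (hx : x ∈ U) (h0 : h x ≠ 0) : ∃ c : ℝ, |c| ≤ 1 ∧
      ∀ᶠ y in 𝓝 x, HasFDerivAt F (c • h y ^ m • powSMulDeriv m h ψ y) y := by
  obtain ⟨c, hc, hFx⟩ := hF.2 x hx h0
  refine ⟨c, hc, ?_⟩
  filter_upwards [hFx.eventually_nhds, hU.eventually_mem hx] with y hFy hy
  exact ((hasFDerivAt_pow_succ_smul m (hh.differentiableAt (hU.mem_nhds hy))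
    (hψ.differentiableAt (hU.mem_nhds hy))).const_smul c).congr_of_eventuallyEq hFy

theorem differentiableOn (hF : IsLocallyPowSMulOn U h (m + 1) ψ F) (hU : IsOpen U)
    (hm : m ≠ 0) (hh : DifferentiableOn ℝ h U) (hψ : DifferentiableOn ℝ ψ U) :
    DifferentiableOn ℝ F U := by
  intro x hx
  refine DifferentiableAt.differentiableWithinAt ?_
  by_cases h0 : h x = 0
  · exact (hF.hasFDerivAt_of_eq_zero hU hm hh hψ.continuousOn hx h0).differentiableAt
  obtain ⟨c, -, hFx⟩ := hF.eventually_hasFDerivAt_of_ne_zero hU hh hψ hx h0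
  exact hFx.self_of_nhds.differentiableAt

theorem fderiv (hF : IsLocallyPowSMulOn U h (m + 1) ψ F) (hU : IsOpen U) (hm : m ≠ 0)
    (hh : DifferentiableOn ℝ h U) (hψ : DifferentiableOn ℝ ψ U) :
    IsLocallyPowSMulOn U h m (powSMulDeriv m h ψ) (fderiv ℝ F) := by
  refine ⟨fun z hz h0 ↦ (hF.hasFDerivAt_of_eq_zero hU hm hh hψ.continuousOn hz h0).fderiv,
    fun x hx h0 ↦ ?_⟩
  obtain ⟨c, hc, hFx⟩ := hF.eventually_hasFDerivAt_of_ne_zero hU hh hψ hx h0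
  exact ⟨c, hc, hFx.mono fun y hy ↦ hy.fderiv⟩

end IsLocallyPowSMulOn

end

universe u

-- `X` and `E` share a universe because the induction replaces `E` by `X →L[ℝ] E`.

theorem IsLocallyPowSMulOn.contDiffOn {X E : Type u} [NormedAddCommGroup X] [NormedSpace ℝ X]
    [NormedAddCommGroup E] [NormedSpace ℝ E] {U : Set X} {h : X → ℝ} {k l : ℕ} {ψ F : X → E}
    (hF : IsLocallyPowSMulOn U h l ψ F) (hU : IsOpen U) (hl : k + 1 ≤ l)
    (hh : ContDiffOn ℝ k h U) (hψ : ContDiffOn ℝ k ψ U) : ContDiffOn ℝ k F U := by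
  induction k generalizing E l ψ F with
  | zero =>
    rw [Nat.cast_zero, contDiffOn_zero] at hh hψ ⊢
    exact hF.continuousOn hU (by omega) hh hψ
  | succ k ih =>
    obtain ⟨m, rfl⟩ : ∃ m, l = m + 1 := ⟨l - 1, by omega⟩
    have hhd := hh.differentiableOn (by simp)
    have hψd := hψ.differentiableOn (by simp)
    rw [Nat.cast_succ] at hh hψ ⊢
    rw [contDiffOn_succ_iff_fderiv_of_isOpen hU]
    exact ⟨hF.differentiableOn hU (by omega) hhd hψd, by simp,
      ih (hF.fderiv hU (by omega) hhd hψd) (by omega) (hh.of_le le_self_add)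
        (hh.powSMulDeriv m hU hψ)⟩

theorem isLocallyPowSMulOn_of_abs_eq_pow {X : Type*} [TopologicalSpace X] {U : Set X}
    {g h : X → ℝ} {l : ℕ} (hU : IsOpen U) (hl : l ≠ 0) (hg : ContinuousOn g U)
    (hh : ContinuousOn h U) (habs : ∀ x ∈ U, |g x| = |h x| ^ l) :
    IsLocallyPowSMulOn U h l (fun _ ↦ (1 : ℝ)) g := by
  refine ⟨fun x hx h0 ↦ by simpa [h0, hl] using habs x hx, fun x hx h0 ↦ ?_⟩
  set q : X → ℝ := fun y ↦ g y / h y ^ l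
  have hne : ∀ᶠ y in 𝓝 x, y ∈ U ∧ h y ≠ 0 :=
    (hU.eventually_mem hx).and ((hh.continuousAt (hU.mem_nhds hx)).eventually_ne h0)
  have hq_abs : ∀ᶠ y in 𝓝 x, |q y| = 1 := hne.mono fun y ⟨hy, hy0⟩ ↦ by
    rw [abs_div, habs y hy, abs_pow, div_self (pow_ne_zero _ (abs_ne_zero.2 hy0))]
  have hq_near : ∀ᶠ y in 𝓝 x, |q y - q x| < 1 := by
    have hq : ContinuousAt q x := (hg.continuousAt (hU.mem_nhds hx)).div
      ((hh.continuousAt (hU.mem_nhds hx)).pow l) (pow_ne_zero _ h0)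
    simpa [Real.dist_eq] using hq.eventually (Metric.ball_mem_nhds _ one_pos)
  have hqx : |q x| = 1 := hq_abs.self_of_nhds
  refine ⟨q x, hqx.le, ?_⟩
  filter_upwards [hne, hq_abs, hq_near] with y hy hqy hqxy
  have hqq : q y = q x := by
    rcases abs_eq_abs.1 (hqy.trans hqx.symm) with h | h
    · exact h
    · rw [h, ← neg_add', abs_neg, ← two_mul, abs_mul, hqx] at hqxy
      norm_num at hqxy
  simp only [smul_eq_mul, mul_one, ← hqq, q, div_mul_cancel₀ _ (pow_ne_zero _ hy.2)]

theorem stmt_10_general (n k l : ℕ) (hl : k + 1 ≤ l)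
    (U : Set (Fin n → ℝ)) (hU : IsOpen U)
    (h g : (Fin n → ℝ) → ℝ)
    (hh : ContDiffOn ℝ k h U)
    (hg : ContinuousOn g U)
    (habs : ∀ x ∈ U, |g x| = |h x| ^ l) :
    ContDiffOn ℝ k g U :=
  (isLocallyPowSMulOn_of_abs_eq_pow hU (by omega) hg hh.continuousOn habs).contDiffOn hU hl hh
    contDiffOn_const

theorem stmt_10 (n k l : ℕ) (hk : 1 ≤ k) (hl : k + 1 ≤ l)
    (U : Set (Fin n → ℝ)) (hU : IsOpen U)
    (h g : (Fin n → ℝ) → ℝ)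
    (hh : ContDiffOn ℝ k h U)
    (hg : ContinuousOn g U)
    (habs : ∀ x ∈ U, |g x| = |h x| ^ l) :
    ContDiffOn ℝ k g U :=
  stmt_10_general n k l hl U hU h g hh hg habs
end

section
/- Let U ⊆ ℝⁿ be open, k ≥ 1, l ≥ k+1, and h ∈ C^k(U). Let g : U → ℝ be continuous with g = h^l on some open set A ⊆ U \ h⁻¹(0) and g = −h^l on U \ (A ∪ h⁻¹(0)), and g = 0 on h⁻¹(0). Then all partial derivatives of g of order at most k exist at every point of h⁻¹(0) and are equal to 0 there. -/
/-!
Away from `h⁻¹(0)` the function `g` agrees near each point with `h ^ l` or with `-h ^ l`, so its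
`j`-th derivative there has the norm of that of `h ^ l`, which by Faà di Bruno's bound is
`O(|h| ^ (l - j)) = O(‖y - x‖ ^ (l - j))` near a zero `x` of `h`. As `l - j ≥ 2` this is
`o(‖y - x‖)`, and on `h⁻¹(0)` itself the `j`-th derivative vanishes by induction on `j`; hence
the `j`-th derivative has derivative `0` at `x`, i.e. the `(j + 1)`-th derivative vanishes there.
-/

open Filter Asymptotics Set Topology Nat

theorem eventuallyEq_or_eventuallyEq_neg {X : Type*} [TopologicalSpace X] {U A : Set X}
    {g ψ : X → ℝ} (hU : IsOpen U) (hA : IsOpen A) (hg : ContinuousOn g U)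
    (hψ : ContinuousOn ψ U) (hgA : ∀ x ∈ A, g x = ψ x)
    (hgB : ∀ x ∈ U \ A, ψ x ≠ 0 → g x = -ψ x) {y : X} (hyU : y ∈ U) (hy : ψ y ≠ 0) :
    g =ᶠ[𝓝 y] ψ ∨ g =ᶠ[𝓝 y] -ψ := by
  by_cases hyA : y ∈ A
  · exact .inl (eventually_of_mem (hA.mem_nhds hyA) hgA)
  right
  -- off `A ∪ ψ⁻¹(0)` we have `g = -ψ ≠ ψ`, and `g ≠ ψ` is an open condition excluding `A`
  let V := (U ∩ ψ ⁻¹' {0}ᶜ) ∩ (g - ψ) ⁻¹' {0}ᶜ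
  have hV : IsOpen V :=
    ((hg.mono inter_subset_left).sub (hψ.mono inter_subset_left)).isOpen_inter_preimage
      (hψ.isOpen_inter_preimage hU isOpen_compl_singleton) isOpen_compl_singleton
  have hyV : y ∈ V := by
    refine ⟨⟨hyU, hy⟩, ?_⟩
    have : -ψ y - ψ y ≠ 0 := fun h0 => hy (by linarith)
    simpa [hgB y ⟨hyU, hyA⟩ hy] using this
  refine eventually_of_mem (hV.mem_nhds hyV) fun z ⟨⟨hzU, hz⟩, hzg⟩ =>
    hgB z ⟨hzU, fun hzA => hzg ?_⟩ hz
  simp [hgA z hzA]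

section

variable {𝕜 E F : Type*} [NontriviallyNormedField 𝕜] [NormedAddCommGroup E] [NormedSpace 𝕜 E]
  [NormedAddCommGroup F] [NormedSpace 𝕜 F]

theorem norm_iteratedFDerivWithin_eq_of_eventuallyEq_or_neg {f ψ : E → F} {s : Set E} {y : E}
    (hs : UniqueDiffOn 𝕜 s) (hy : y ∈ s) (hfψ : f =ᶠ[𝓝 y] ψ ∨ f =ᶠ[𝓝 y] -ψ) (j : ℕ) :
    ‖iteratedFDerivWithin 𝕜 j f s y‖ = ‖iteratedFDerivWithin 𝕜 j ψ s y‖ := by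
  rcases hfψ with hfψ | hfψ
  · rw [(hfψ.filter_mono nhdsWithin_le_nhds).iteratedFDerivWithin_eq hfψ.eq_of_nhds]
  · rw [(hfψ.filter_mono nhdsWithin_le_nhds).iteratedFDerivWithin_eq hfψ.eq_of_nhds,
      iteratedFDerivWithin_neg_apply hs hy, norm_neg]

theorem norm_iteratedDeriv_pow_le {t : 𝕜} (ht : ‖t‖ ≤ 1) {i j l : ℕ} (hij : i ≤ j)
    (hjl : j ≤ l) : ‖iteratedDeriv i (· ^ l) t‖ ≤ l ! * ‖t‖ ^ (l - j) := by
  have hdesc : (l.descFactorial i : ℝ) ≤ l ! := by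
    exact_mod_cast Nat.le_of_dvd l.factorial_pos
      (Dvd.intro_left _ (factorial_mul_descFactorial (hij.trans hjl)))
  rw [iteratedDeriv_pow, norm_mul, norm_pow]
  calc ‖(l.descFactorial i : 𝕜)‖ * ‖t‖ ^ (l - i)
      ≤ l.descFactorial i * ‖t‖ ^ (l - j) := by
        refine mul_le_mul ?_ (pow_le_pow_of_le_one (norm_nonneg t) ht (by omega))
          (by positivity) (by positivity)
        simpa using Nat.norm_cast_le (α := 𝕜) (l.descFactorial i)
    _ ≤ l ! * ‖t‖ ^ (l - j) := by gcongr

theorem exists_eventually_norm_iteratedFDerivWithin_le {f : E → F} {s : Set E} {x : E}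
    {k : ℕ} (hf : ContDiffOn 𝕜 k f s) (hs : UniqueDiffOn 𝕜 s) (hx : x ∈ s) :
    ∃ D, 1 ≤ D ∧ ∀ᶠ y in 𝓝[s] x, ∀ i ≤ k, ‖iteratedFDerivWithin 𝕜 i f s y‖ ≤ D := by
  let S : E → ℝ := fun y => ∑ i ∈ Finset.range (k + 1), ‖iteratedFDerivWithin 𝕜 i f s y‖
  have hS : ContinuousWithinAt S s x := tendsto_finsetSum _ fun i hi =>
    ((hf.continuousOn_iteratedFDerivWithin
      (by exact_mod_cast Finset.mem_range_succ_iff.mp hi) hs) x hx).norm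
  refine ⟨S x + 1, by simpa using Finset.sum_nonneg fun i _ => norm_nonneg _, ?_⟩
  filter_upwards [hS.eventually (eventually_le_nhds (lt_add_one (S x)))] with y hy i hi
  exact (Finset.single_le_sum (f := fun i => ‖iteratedFDerivWithin 𝕜 i f s y‖)
    (fun i _ => norm_nonneg _) (Finset.mem_range_succ_iff.mpr hi)).trans hy

theorem isBigO_iteratedFDerivWithin_pow {h : E → 𝕜} {s : Set E} {x : E} {k l j : ℕ}
    (hh : ContDiffOn 𝕜 k h s) (hs : UniqueDiffOn 𝕜 s) (hx : x ∈ s) (hx0 : h x = 0)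
    (hjk : j ≤ k) (hjl : j ≤ l) :
    iteratedFDerivWithin 𝕜 j (fun y => h y ^ l) s =O[𝓝[s] x] fun y => h y ^ (l - j) := by
  obtain ⟨D, hD1, hD⟩ := exists_eventually_norm_iteratedFDerivWithin_le hh hs hx
  have hsmall : ∀ᶠ y in 𝓝[s] x, ‖h y‖ ≤ 1 :=
    (hh.continuousOn x hx).norm.eventually (eventually_le_nhds (by simp [hx0]))
  refine IsBigO.of_bound (j ! * l ! * D ^ j) ?_
  filter_upwards [hD, hsmall, self_mem_nhdsWithin] with y hyD hy1 hys
  have hcomp := norm_iteratedFDerivWithin_comp_le (g := fun t : 𝕜 => t ^ l)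
    (contDiff_id.pow l).contDiffOn hh (by exact_mod_cast hjk) uniqueDiffOn_univ hs
    (mapsTo_univ _ _) hys (C := l ! * ‖h y‖ ^ (l - j)) (D := D)
    (fun i hij => by
      rw [iteratedFDerivWithin_univ, norm_iteratedFDeriv_eq_norm_iteratedDeriv]
      exact norm_iteratedDeriv_pow_le hy1 hij hjl)
    (fun i hi hij => (hyD i (hij.trans hjk)).trans (le_self_pow₀ hD1 (by omega)))
  calc ‖iteratedFDerivWithin 𝕜 j (fun y => h y ^ l) s y‖
      ≤ j ! * (l ! * ‖h y‖ ^ (l - j)) * D ^ j := hcomp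
    _ = j ! * l ! * D ^ j * ‖h y ^ (l - j)‖ := by rw [norm_pow]; ring

theorem iteratedFDerivWithin_eq_zero_of_isLittleO {f : E → F} {s Z : Set E}
    (hs : UniqueDiffOn 𝕜 s) {k : ℕ} (hf : ∀ x ∈ s ∩ Z, f x = 0)
    (hsmall : ∀ j < k, ∀ x ∈ s ∩ Z,
      iteratedFDerivWithin 𝕜 j f s =o[𝓝[s \ Z] x] fun y => y - x) :
    ∀ j ≤ k, ∀ x ∈ s ∩ Z, iteratedFDerivWithin 𝕜 j f s x = 0 := by
  intro j
  induction j with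
  | zero =>
    intro _ x hx
    ext
    simp [hf x hx]
  | succ j ih =>
    intro hjk x hx
    have hvanish : iteratedFDerivWithin 𝕜 j f s =ᶠ[𝓝[s ∩ Z] x] 0 :=
      eventually_nhdsWithin_of_forall fun y hy => ih (by omega) y hy
    have hlittle : iteratedFDerivWithin 𝕜 j f s =o[𝓝[s] x] fun y => y - x := by
      have hsplit : 𝓝[s] x = 𝓝[s \ Z] x ⊔ 𝓝[s ∩ Z] x := by
        rw [← nhdsWithin_union, sdiff_union_inter]
      rw [hsplit]
      exact (hsmall j (by omega) x hx).sup (hvanish.trans_isLittleO (isLittleO_zero _ _))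
    have hderiv : HasFDerivWithinAt (iteratedFDerivWithin 𝕜 j f s)
        (0 : E →L[𝕜] (E [×j]→L[𝕜] F)) s x := by
      rw [hasFDerivWithinAt_iff_isLittleO]
      simpa [ih (by omega) x hx] using hlittle
    ext m
    rw [iteratedFDerivWithin_succ_apply_left, hderiv.fderivWithin (hs x hx.1)]
    simp

end

theorem stmt_11_general (n k l : ℕ) (hl : k + 1 ≤ l)
    (U A : Set (Fin n → ℝ)) (hU : IsOpen U) (hA : IsOpen A)
    (h g : (Fin n → ℝ) → ℝ)
    (hh : ContDiffOn ℝ k h U)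
    (hg : ContinuousOn g U)
    (hgA : ∀ x ∈ A, g x = h x ^ l)
    (hgB : ∀ x ∈ U \ (A ∪ {x | h x = 0}), g x = -(h x ^ l))
    (hg0 : ∀ x ∈ U, h x = 0 → g x = 0) :
    ∀ x ∈ U, h x = 0 → ∀ j : ℕ, j ≤ k →
      iteratedFDerivWithin ℝ j g U x = 0 := by
  have hUD : UniqueDiffOn ℝ U := hU.uniqueDiffOn
  have hsign : ∀ y ∈ U \ {x | h x = 0}, ∀ j : ℕ, ‖iteratedFDerivWithin ℝ j g U y‖ =
      ‖iteratedFDerivWithin ℝ j (fun z => h z ^ l) U y‖ := by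
    rintro y ⟨hyU, hy⟩ j
    refine norm_iteratedFDerivWithin_eq_of_eventuallyEq_or_neg hUD hyU
      (eventuallyEq_or_eventuallyEq_neg hU hA hg (hh.continuousOn.pow l) hgA ?_ hyU
        (pow_ne_zero l hy)) j
    rintro z ⟨hzU, hzA⟩ hz
    have hz0 : h z ≠ 0 := fun hz0 => hz (by simp [hz0, show l ≠ 0 by omega])
    exact hgB z ⟨hzU, fun hz' => hz'.elim hzA hz0⟩
  intro x hxU hx0 j hjk
  refine iteratedFDerivWithin_eq_zero_of_isLittleO (Z := {x | h x = 0}) hUD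
    (fun y hy => hg0 y hy.1 hy.2) ?_ j hjk x ⟨hxU, hx0⟩
  rintro i hik y ⟨hyU, hy0 : h y = 0⟩
  have hlin : h =O[𝓝[U] y] fun z => ‖z - y‖ := by
    have hd := (hh.differentiableOn (by exact_mod_cast (by omega : k ≠ 0))) y hyU
    simpa [hy0] using hd.hasFDerivWithinAt.isBigO_sub.norm_right
  have hsub : 𝓝[U \ {x | h x = 0}] y ≤ 𝓝[U] y := nhdsWithin_mono _ sdiff_subset
  calc iteratedFDerivWithin ℝ i g U
      =O[𝓝[U \ {x | h x = 0}] y] iteratedFDerivWithin ℝ i (fun z => h z ^ l) U :=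
        IsBigO.of_bound' (eventually_nhdsWithin_of_forall fun z hz => (hsign z hz i).le)
    _ =O[𝓝[U \ {x | h x = 0}] y] fun z => h z ^ (l - i) :=
        (isBigO_iteratedFDerivWithin_pow hh hUD hyU hy0 hik.le (by omega)).mono hsub
    _ =O[𝓝[U \ {x | h x = 0}] y] fun z => ‖z - y‖ ^ (l - i) := (hlin.pow _).mono hsub
    _ =o[𝓝[U \ {x | h x = 0}] y] fun z => z - y :=
        (isLittleO_pow_sub_sub y (by omega)).mono nhdsWithin_le_nhds

theorem stmt_11 (n k l : ℕ) (hk : 1 ≤ k) (hl : k + 1 ≤ l)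
    (U A : Set (Fin n → ℝ)) (hU : IsOpen U) (hA : IsOpen A)
    (h g : (Fin n → ℝ) → ℝ)
    (hAsub : A ⊆ U \ {x | h x = 0})
    (hh : ContDiffOn ℝ k h U)
    (hg : ContinuousOn g U)
    (hgA : ∀ x ∈ A, g x = h x ^ l)
    (hgB : ∀ x ∈ U \ (A ∪ {x | h x = 0}), g x = -(h x ^ l))
    (hg0 : ∀ x ∈ U, h x = 0 → g x = 0) :
    ∀ x ∈ U, h x = 0 → ∀ j : ℕ, j ≤ k →
      iteratedFDerivWithin ℝ j g U x = 0 :=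
  stmt_11_general n k l hl U A hU hA h g hh hg hgA hgB hg0
end

section
/- Let h : ℝ → ℝ be a C^k function with k ≥ 1, let l ≥ k+1, and let g : ℝ → ℝ be a continuous function such that for every x, g(x) = h(x)^l or g(x) = −h(x)^l. Then g is differentiable at every zero of h, with derivative 0. -/
open Asymptotics Topology

theorem hasDerivAt_zero_of_norm_le_pow {𝕜 F G : Type*} [NontriviallyNormedField 𝕜]
    [NormedAddCommGroup F] [NormedSpace 𝕜 F] [NormedAddCommGroup G] [NormedSpace 𝕜 G]
    {g : 𝕜 → F} {h : 𝕜 → G} {x₀ : 𝕜} {l : ℕ} (hl : 1 < l)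
    (hdiff : DifferentiableAt 𝕜 h x₀) (hx₀ : h x₀ = 0) (hgh : ∀ x, ‖g x‖ ≤ ‖h x‖ ^ l) :
    HasDerivAt g 0 x₀ := by
  have hg_le : g =O[𝓝 x₀] fun x => ‖h x‖ ^ l :=
    isBigO_of_le _ fun x => (hgh x).trans (le_abs_self _)
  have hh_lin : h =O[𝓝 x₀] fun x => x - x₀ := by
    simpa [hx₀] using hdiff.hasDerivAt.isBigO_sub
  have hh_pow : (fun x => ‖h x‖ ^ l) =O[𝓝 x₀] fun x => ‖x - x₀‖ ^ l :=
    hh_lin.norm_left.norm_right.pow l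
  have hg₀ : g x₀ = 0 := by
    simpa [hx₀, (zero_lt_one.trans hl).ne'] using hgh x₀
  rw [hasDerivAt_iff_isLittleO]
  simpa [hg₀] using (hg_le.trans hh_pow).trans_isLittleO (isLittleO_pow_sub_sub x₀ hl)

theorem stmt_12_general (k l : ℕ) (hk : 1 ≤ k) (hl : k + 1 ≤ l)
    (h g : ℝ → ℝ) (hh : ContDiff ℝ k h)
    (hsign : ∀ x, g x = h x ^ l ∨ g x = -(h x ^ l)) :
    ∀ x, h x = 0 → HasDerivAt g 0 x := by
  intro x₀ hx₀
  have hdiff : Differentiable ℝ h :=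
    hh.differentiable (by exact_mod_cast Nat.one_le_iff_ne_zero.mp hk)
  refine hasDerivAt_zero_of_norm_le_pow (l := l) (by omega) (hdiff x₀) hx₀ fun x => ?_
  rcases hsign x with hgx | hgx <;> simp [hgx, norm_pow]

theorem stmt_12 (k l : ℕ) (hk : 1 ≤ k) (hl : k + 1 ≤ l)
    (h g : ℝ → ℝ) (hh : ContDiff ℝ k h) (hg : Continuous g)
    (hsign : ∀ x, g x = h x ^ l ∨ g x = -(h x ^ l)) :
    ∀ x, h x = 0 → HasDerivAt g 0 x :=
  stmt_12_general k l hk hl h g hh hsign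
end
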